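/- arXiv:1901.06686 — 4 statements merged into one kernel-verified Lean document; each statement's English description precedes it below -/
import Mathlib

section
/- Assume (H1). Let (u, v1, v2, h) be a classical solution of the FBP on [0, T] with admissible initial data (u0, h0). Then sup_{0 ≤ x ≤ h(t)} u(t,x) ≤ max{ sup_{[0,h0]} u0, M0 } for every t ∈ [0, T]. -/
open Set Filter Topology

/-- positive part of a real number -/
noncomputable def pp (x : ℝ) : ℝ := max x 0

/-- the constant M from the paper -/
noncomputable def Mconst (χ1 χ2 lam1 lam2 μ1 μ2 : ℝ) : ℝ :=
  min ((1 / lam2) * (pp (χ2 * μ2 * lam2 - χ1 * μ1 * lam1) + χ1 * μ1 * pp (lam1 - lam2)))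
      ((1 / lam1) * (pp (χ2 * μ2 * lam2 - χ1 * μ1 * lam1) + χ2 * μ2 * pp (lam1 - lam2)))

/-- the constant K from the paper -/
noncomputable def Kconst (χ1 χ2 lam1 lam2 μ1 μ2 : ℝ) : ℝ :=
  min ((1 / lam2) * (|χ1 * μ1 * lam1 - χ2 * μ2 * lam2| + χ1 * μ1 * |lam1 - lam2|))
      ((1 / lam1) * (|χ1 * μ1 * lam1 - χ2 * μ2 * lam2| + χ2 * μ2 * |lam1 - lam2|))

/-- infimum of a coefficient function over ℝ × [0,∞) -/
noncomputable def infOn (f : ℝ → ℝ → ℝ) : ℝ := sInf {y | ∃ t x, 0 ≤ x ∧ f t x = y}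

/-- supremum of a coefficient function over ℝ × [0,∞) -/
noncomputable def supOn (f : ℝ → ℝ → ℝ) : ℝ := sSup {y | ∃ t x, 0 ≤ x ∧ f t x = y}

/-- the constant M0 from the paper -/
noncomputable def M0const (χ1 χ2 lam1 lam2 μ1 μ2 : ℝ) (a b : ℝ → ℝ → ℝ) : ℝ :=
  supOn a / (infOn b + χ2 * μ2 - χ1 * μ1 - Mconst χ1 χ2 lam1 lam2 μ1 μ2)

/-- the constant m0 from the paper -/
noncomputable def m0const (χ1 χ2 lam1 lam2 μ1 μ2 : ℝ) (a b : ℝ → ℝ → ℝ) : ℝ :=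
  infOn a * (infOn b - (1 + supOn a / infOn a) * χ1 * μ1 + χ2 * μ2 - Mconst χ1 χ2 lam1 lam2 μ1 μ2) /
    ((infOn b - χ1 * μ1 + χ2 * μ2 - Mconst χ1 χ2 lam1 lam2 μ1 μ2) * (supOn b - χ1 * μ1 + χ2 * μ2))

/-- a bounded C¹ coefficient function on ℝ × [0,∞) with positive infimum -/
structure Coeff (f : ℝ → ℝ → ℝ) : Prop where
  bdd : ∃ C, ∀ t x, 0 ≤ x → |f t x| ≤ C
  smooth : ContDiffOn ℝ 1 (Function.uncurry f) (univ ×ˢ Ici 0)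
  inf_pos : 0 < infOn f

/-- admissible initial data for the free boundary problem -/
structure AdmissibleInit (u0 : ℝ → ℝ) (h0 : ℝ) : Prop where
  h0_pos : 0 < h0
  smooth : ContDiffOn ℝ 2 u0 (Icc 0 h0)
  nonneg : ∀ x ∈ Icc 0 h0, 0 ≤ u0 x
  neumann : deriv u0 0 = 0
  dirichlet : u0 h0 = 0

/-- A classical solution of the free boundary problem (FBP) on the time interval `J`,
with `Jr ⊆ J` the set of times strictly above the initial time (where the parabolic
regularity and the parabolic equation are required). -/
structure IsSol (ν χ1 χ2 lam1 lam2 μ1 μ2 : ℝ) (a b : ℝ → ℝ → ℝ)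
    (J Jr : Set ℝ) (u v1 v2 : ℝ → ℝ → ℝ) (h : ℝ → ℝ) : Prop where
  h_pos : ∀ t ∈ J, 0 < h t
  /-- h is C¹ and satisfies the Stefan condition h'(t) = -ν uₓ(t,h(t)) -/
  h_deriv : ∀ t ∈ J, HasDerivAt h (-(ν * deriv (u t) (h t))) t
  h_deriv_cont : ContinuousOn (deriv h) J
  u_nonneg : ∀ t ∈ J, ∀ x ∈ Icc 0 (h t), 0 ≤ u t x
  v1_nonneg : ∀ t ∈ J, ∀ x ∈ Icc 0 (h t), 0 ≤ v1 t x
  v2_nonneg : ∀ t ∈ J, ∀ x ∈ Icc 0 (h t), 0 ≤ v2 t x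
  u_cont : ContinuousOn (Function.uncurry u) {p : ℝ × ℝ | p.1 ∈ J ∧ p.2 ∈ Icc 0 (h p.1)}
  v1_cont : ContinuousOn (Function.uncurry v1) {p : ℝ × ℝ | p.1 ∈ J ∧ p.2 ∈ Icc 0 (h p.1)}
  v2_cont : ContinuousOn (Function.uncurry v2) {p : ℝ × ℝ | p.1 ∈ J ∧ p.2 ∈ Icc 0 (h p.1)}
  u_diff_x : ∀ t ∈ Jr, ∀ x ∈ Icc 0 (h t),
    DifferentiableAt ℝ (u t) x ∧ DifferentiableAt ℝ (deriv (u t)) x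
  u_diff_t : ∀ t ∈ Jr, ∀ x ∈ Icc 0 (h t), DifferentiableAt ℝ (fun s => u s x) t
  v1_diff_x : ∀ t ∈ J, ∀ x ∈ Icc 0 (h t),
    DifferentiableAt ℝ (v1 t) x ∧ DifferentiableAt ℝ (deriv (v1 t)) x
  v2_diff_x : ∀ t ∈ J, ∀ x ∈ Icc 0 (h t),
    DifferentiableAt ℝ (v2 t) x ∧ DifferentiableAt ℝ (deriv (v2 t)) x
  ux_cont : ContinuousOn (fun p : ℝ × ℝ => deriv (u p.1) p.2)
    {p : ℝ × ℝ | p.1 ∈ Jr ∧ p.2 ∈ Icc 0 (h p.1)}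
  uxx_cont : ContinuousOn (fun p : ℝ × ℝ => deriv (deriv (u p.1)) p.2)
    {p : ℝ × ℝ | p.1 ∈ Jr ∧ p.2 ∈ Icc 0 (h p.1)}
  ut_cont : ContinuousOn (fun p : ℝ × ℝ => deriv (fun s => u s p.2) p.1)
    {p : ℝ × ℝ | p.1 ∈ Jr ∧ p.2 ∈ Icc 0 (h p.1)}
  v1x_cont : ContinuousOn (fun p : ℝ × ℝ => deriv (v1 p.1) p.2)
    {p : ℝ × ℝ | p.1 ∈ J ∧ p.2 ∈ Icc 0 (h p.1)}
  v2x_cont : ContinuousOn (fun p : ℝ × ℝ => deriv (v2 p.1) p.2)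
    {p : ℝ × ℝ | p.1 ∈ J ∧ p.2 ∈ Icc 0 (h p.1)}
  /-- the parabolic equation for u -/
  pde : ∀ t ∈ Jr, ∀ x ∈ Ioo 0 (h t),
    deriv (fun s => u s x) t
      = deriv (deriv (u t)) x
        - χ1 * deriv (fun y => u t y * deriv (v1 t) y) x
        + χ2 * deriv (fun y => u t y * deriv (v2 t) y) x
        + u t x * (a t x - b t x * u t x)
  /-- the elliptic equation for v1 -/
  v1_ode : ∀ t ∈ J, ∀ x ∈ Ioo 0 (h t),
    deriv (deriv (v1 t)) x - lam1 * v1 t x + μ1 * u t x = 0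
  /-- the elliptic equation for v2 -/
  v2_ode : ∀ t ∈ J, ∀ x ∈ Ioo 0 (h t),
    deriv (deriv (v2 t)) x - lam2 * v2 t x + μ2 * u t x = 0
  /-- boundary conditions at x = 0 -/
  bc0 : ∀ t ∈ J, deriv (u t) 0 = 0 ∧ deriv (v1 t) 0 = 0 ∧ deriv (v2 t) 0 = 0
  /-- boundary conditions at x = h(t) -/
  bch : ∀ t ∈ J, u t (h t) = 0 ∧ deriv (v1 t) (h t) = 0 ∧ deriv (v2 t) (h t) = 0

/-!
Fix `τ` and let `(t₁, x₁)` maximise `u` over `{(t, x) | t ≤ τ, x ≤ h t}`, with value `U`. If `t₁ = 0`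
then `U ≤ sup u₀`. Otherwise `x₁ < h t₁` (as `u = 0` on the free boundary), and at `(t₁, x₁)` we have
`u_t ≥ 0`, `u_x = 0`, `u_xx ≤ 0`. Expanding `(u vᵢₓ)ₓ = uₓ vᵢₓ + u (λᵢ vᵢ - μᵢ u)`, the equation
at `(t₁, x₁)` gives `0 ≤ U (χ₂λ₂v₂ - χ₁λ₁v₁) + (χ₁μ₁ - χ₂μ₂) U² + U (a - b U)`. The combination
`P = χ₂λ₂v₂ - χ₁λ₁v₁` solves `P'' = λ P - F_λ` with Neumann conditions for either `λ = λ₁, λ₂`, so the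
maximum principle bounds `λ P` by `sup F_λ`; bounding `F_λ` through `λᵢ vᵢ ≤ μᵢ U` (again the maximum
principle) yields `P ≤ M U`. Hence `0 ≤ U (a_sup - (b_inf + χ₂μ₂ - χ₁μ₁ - M) U)`, i.e. `U ≤ M0`.
-/

lemma strictMonoOn_Icc_of_hasDerivAt_pos {f f' : ℝ → ℝ} {α γ : ℝ}
    (hf : ∀ x ∈ Icc α γ, HasDerivAt f (f' x) x) (hpos : ∀ x ∈ Ioo α γ, 0 < f' x) :
    StrictMonoOn f (Icc α γ) :=
  strictMonoOn_of_hasDerivWithinAt_pos (convex_Icc α γ)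
    (fun x hx => (hf x hx).continuousAt.continuousWithinAt)
    (fun x hx => (hf x (interior_subset hx)).hasDerivWithinAt)
    (by simpa only [interior_Icc] using hpos)

lemma strictAntiOn_Icc_of_hasDerivAt_neg {f f' : ℝ → ℝ} {α γ : ℝ}
    (hf : ∀ x ∈ Icc α γ, HasDerivAt f (f' x) x) (hneg : ∀ x ∈ Ioo α γ, f' x < 0) :
    StrictAntiOn f (Icc α γ) :=
  strictAntiOn_of_hasDerivWithinAt_neg (convex_Icc α γ)
    (fun x hx => (hf x hx).continuousAt.continuousWithinAt)
    (fun x hx => (hf x (interior_subset hx)).hasDerivWithinAt)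
    (by simpa only [interior_Icc] using hneg)

section SecondDerivative

variable {f f' f'' : ℝ → ℝ} {α γ : ℝ}

lemma lt_right_of_deriv_left_eq_zero_of_deriv2_pos (hαγ : α < γ)
    (hf : ∀ x ∈ Icc α γ, HasDerivAt f (f' x) x) (hf' : ∀ x ∈ Icc α γ, HasDerivAt f' (f'' x) x)
    (hf''pos : ∀ x ∈ Ioo α γ, 0 < f'' x) (hα : f' α = 0) : f α < f γ := by
  have hf'mono := strictMonoOn_Icc_of_hasDerivAt_pos hf' hf''pos
  refine strictMonoOn_Icc_of_hasDerivAt_pos hf (fun x hx => ?_)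
    (left_mem_Icc.2 hαγ.le) (right_mem_Icc.2 hαγ.le) hαγ
  simpa [hα] using hf'mono (left_mem_Icc.2 hαγ.le) (Ioo_subset_Icc_self hx) hx.1

lemma lt_left_of_deriv_right_eq_zero_of_deriv2_pos (hαγ : α < γ)
    (hf : ∀ x ∈ Icc α γ, HasDerivAt f (f' x) x) (hf' : ∀ x ∈ Icc α γ, HasDerivAt f' (f'' x) x)
    (hf''pos : ∀ x ∈ Ioo α γ, 0 < f'' x) (hγ : f' γ = 0) : f γ < f α := by
  have hf'mono := strictMonoOn_Icc_of_hasDerivAt_pos hf' hf''pos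
  refine strictAntiOn_Icc_of_hasDerivAt_neg hf (fun x hx => ?_)
    (left_mem_Icc.2 hαγ.le) (right_mem_Icc.2 hαγ.le) hαγ
  simpa [hγ] using hf'mono (Ioo_subset_Icc_self hx) (right_mem_Icc.2 hαγ.le) hx.2

/-- `f''` need only agree with the continuous `G` on the open interval: this is how the
equations of the problem, which hold for `0 < x < h t`, reach a maximum on the boundary. -/
lemma IsMaxOn.nonpos_of_deriv2_eqOn {G : ℝ → ℝ} {β y : ℝ} (hmax : IsMaxOn f (Icc α β) y)
    (hαβ : α < β) (hy : y ∈ Icc α β) (hf : ∀ x ∈ Icc α β, HasDerivAt f (f' x) x)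
    (hf' : ∀ x ∈ Icc α β, HasDerivAt f' (f'' x) x) (hy' : f' y = 0)
    (hG : ContinuousOn G (Icc α β)) (hf''G : EqOn f'' G (Ioo α β)) : G y ≤ 0 := by
  by_contra! hGy
  have hGev : ∀ᶠ x in 𝓝[Icc α β] y, 0 < G x := (hG y hy).eventually (lt_mem_nhds hGy)
  rcases hy.2.lt_or_eq with hyβ | rfl
  · obtain ⟨γ, hγ, hsub⟩ := (mem_nhdsGT_iff_exists_mem_Ioc_Ioo_subset hyβ).1
      (nhdsWithin_le_of_mem (Icc_mem_nhdsGT_of_mem ⟨hy.1, hyβ⟩) hGev)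
    have hIcc : Icc y γ ⊆ Icc α β := Icc_subset_Icc hy.1 hγ.2
    have := lt_right_of_deriv_left_eq_zero_of_deriv2_pos hγ.1 (fun x hx => hf x (hIcc hx))
      (fun x hx => hf' x (hIcc hx))
      (fun x hx => (hf''G (Ioo_subset_Ioo hy.1 hγ.2 hx)).symm ▸ hsub hx) hy'
    exact (hmax (hIcc (right_mem_Icc.2 hγ.1.le))).not_gt this
  · obtain ⟨γ, hγ, hsub⟩ := (mem_nhdsLT_iff_exists_mem_Ico_Ioo_subset hαβ).1
      (nhdsWithin_le_of_mem (Icc_mem_nhdsLT hαβ) hGev)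
    have hIcc : Icc γ y ⊆ Icc α y := Icc_subset_Icc hγ.1 le_rfl
    have := lt_left_of_deriv_right_eq_zero_of_deriv2_pos hγ.2 (fun x hx => hf x (hIcc hx))
      (fun x hx => hf' x (hIcc hx))
      (fun x hx => (hf''G (Ioo_subset_Ioo hγ.1 le_rfl hx)).symm ▸ hsub hx) hy'
    exact (hmax (hIcc (left_mem_Icc.2 hγ.2.le))).not_gt this

end SecondDerivative

lemma mul_le_of_neumann {w w' w'' F : ℝ → ℝ} {α β lam C : ℝ} (hαβ : α < β) (hlam : 0 ≤ lam)
    (hw : ∀ x ∈ Icc α β, HasDerivAt w (w' x) x) (hw' : ∀ x ∈ Icc α β, HasDerivAt w' (w'' x) x)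
    (hα : w' α = 0) (hβ : w' β = 0) (hF : ContinuousOn F (Icc α β))
    (hode : ∀ x ∈ Ioo α β, w'' x = lam * w x - F x) (hFC : ∀ x ∈ Icc α β, F x ≤ C) :
    ∀ x ∈ Icc α β, lam * w x ≤ C := by
  have hwc : ContinuousOn w (Icc α β) := fun x hx => (hw x hx).continuousAt.continuousWithinAt
  obtain ⟨y, hy, hmax⟩ := isCompact_Icc.exists_isMaxOn (nonempty_Icc.2 hαβ.le) hwc
  have hy' : w' y = 0 := by
    rcases hy.1.eq_or_lt with rfl | hαy
    · exact hα
    rcases hy.2.eq_or_lt with rfl | hyβ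
    · exact hβ
    exact (hmax.isLocalMax (Icc_mem_nhds hαy hyβ)).hasDerivAt_eq_zero (hw y hy)
  have hGy := hmax.nonpos_of_deriv2_eqOn hαβ hy hw hw' hy' (continuousOn_const.mul hwc |>.sub hF)
    hode
  intro x hx
  calc lam * w x ≤ lam * w y := mul_le_mul_of_nonneg_left (hmax hx) hlam
    _ ≤ F y := sub_nonpos.1 hGy
    _ ≤ C := hFC y hy

lemma lam_mul_le_of_neumann {v w : ℝ → ℝ} {β lam μ U : ℝ} (hβ : 0 < β) (hlam : 0 ≤ lam)
    (hμ : 0 ≤ μ) (hv : ∀ x ∈ Icc 0 β, DifferentiableAt ℝ v x ∧ DifferentiableAt ℝ (deriv v) x)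
    (h0 : deriv v 0 = 0) (hβv : deriv v β = 0) (hw : ContinuousOn w (Icc 0 β))
    (hode : ∀ x ∈ Ioo 0 β, deriv (deriv v) x - lam * v x + μ * w x = 0)
    (hwU : ∀ x ∈ Icc 0 β, w x ≤ U) : ∀ x ∈ Icc 0 β, lam * v x ≤ μ * U :=
  mul_le_of_neumann (F := fun x => μ * w x) hβ hlam (fun x hx => (hv x hx).1.hasDerivAt)
    (fun x hx => (hv x hx).2.hasDerivAt) h0 hβv (continuousOn_const.mul hw)
    (fun x hx => by linarith [hode x hx]) fun x hx => mul_le_mul_of_nonneg_left (hwU x hx) hμ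

lemma HasDerivAt.nonneg_of_eventually_le_left {f : ℝ → ℝ} {c t : ℝ} (hf : HasDerivAt f c t)
    (hle : ∀ᶠ s in 𝓝[<] t, f s ≤ f t) : 0 ≤ c := by
  refine ge_of_tendsto (hasDerivAt_iff_tendsto_slope_left_right.1 hf).1 ?_
  filter_upwards [hle, self_mem_nhdsWithin] with s hs hst
  rw [slope_def_field]
  exact div_nonneg_of_nonpos (sub_nonpos.2 hs) (sub_nonpos.2 (le_of_lt hst))

lemma isCompact_region_under_graph {h : ℝ → ℝ} {t₀ t₁ : ℝ} (hh : ContinuousOn h (Icc t₀ t₁))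
    (hpos : ∀ t ∈ Icc t₀ t₁, 0 ≤ h t) :
    IsCompact {p : ℝ × ℝ | p.1 ∈ Icc t₀ t₁ ∧ p.2 ∈ Icc 0 (h p.1)} := by
  have : {p : ℝ × ℝ | p.1 ∈ Icc t₀ t₁ ∧ p.2 ∈ Icc 0 (h p.1)} =
      (fun q : ℝ × ℝ => (q.1, q.2 * h q.1)) '' Icc t₀ t₁ ×ˢ Icc 0 1 := by
    ext ⟨t, x⟩
    constructor
    · rintro ⟨ht, hx0, hxh⟩
      refine ⟨(t, x / h t), ⟨ht, div_nonneg hx0 (hpos t ht), div_le_one_of_le₀ hxh (hpos t ht)⟩, ?_⟩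
      simp [div_mul_cancel_of_imp (fun h0 : h t = 0 => le_antisymm (h0 ▸ hxh) hx0)]
    · rintro ⟨⟨t, r⟩, ⟨ht, hr0, hr1⟩, hq⟩
      obtain ⟨rfl, rfl⟩ := Prod.mk.inj hq
      exact ⟨ht, mul_nonneg hr0 (hpos t ht), mul_le_of_le_one_left (hpos t ht) hr1⟩
  rw [this]
  exact (isCompact_Icc.prod isCompact_Icc).image_of_continuousOn
    (continuousOn_fst.prodMk (continuousOn_snd.mul (hh.comp continuousOn_fst fun q hq => hq.1)))

lemma ContinuousOn.slice {F : ℝ × ℝ → ℝ} {S : Set ℝ} {h : ℝ → ℝ} {t : ℝ}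
    (hF : ContinuousOn F {p | p.1 ∈ S ∧ p.2 ∈ Icc 0 (h p.1)}) (ht : t ∈ S) :
    ContinuousOn (fun x => F (t, x)) (Icc 0 (h t)) :=
  hF.comp (continuous_const.prodMk continuous_id).continuousOn fun _ hx => ⟨ht, hx⟩

lemma mul_le_pp_mul (c : ℝ) {y U : ℝ} (hy : 0 ≤ y) (hyU : y ≤ U) : c * y ≤ pp c * U :=
  calc c * y ≤ pp c * y := mul_le_mul_of_nonneg_right (le_max_left c 0) hy
    _ ≤ pp c * U := mul_le_mul_of_nonneg_left hyU (le_max_right c 0)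

namespace Coeff

variable {f : ℝ → ℝ → ℝ}

lemma le_supOn (hf : Coeff f) (t : ℝ) {x : ℝ} (hx : 0 ≤ x) : f t x ≤ supOn f := by
  obtain ⟨C, hC⟩ := hf.bdd
  exact le_csSup ⟨C, by rintro _ ⟨t', x', hx', rfl⟩; exact (abs_le.1 (hC t' x' hx')).2⟩
    ⟨t, x, hx, rfl⟩

lemma infOn_le (hf : Coeff f) (t : ℝ) {x : ℝ} (hx : 0 ≤ x) : infOn f ≤ f t x := by
  obtain ⟨C, hC⟩ := hf.bdd
  exact csInf_le ⟨-C, by rintro _ ⟨t', x', hx', rfl⟩; exact (abs_le.1 (hC t' x' hx')).1⟩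
    ⟨t, x, hx, rfl⟩

end Coeff

namespace IsSol

variable {ν χ1 χ2 lam1 lam2 μ1 μ2 : ℝ} {a b : ℝ → ℝ → ℝ} {J Jr : Set ℝ}
  {u v1 v2 : ℝ → ℝ → ℝ} {h : ℝ → ℝ} {t U : ℝ}

lemma exists_forall_le (hsol : IsSol ν χ1 χ2 lam1 lam2 μ1 μ2 a b J Jr u v1 v2 h) {τ : ℝ}
    (hτ0 : 0 ≤ τ) (hJ : Icc 0 τ ⊆ J) :
    ∃ t₁ ∈ Icc 0 τ, ∃ x₁ ∈ Icc 0 (h t₁), ∀ s ∈ Icc 0 τ, ∀ x ∈ Icc 0 (h s), u s x ≤ u t₁ x₁ := by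
  obtain ⟨⟨t₁, x₁⟩, ⟨ht₁, hx₁⟩, hmax⟩ :=
    (isCompact_region_under_graph
      (fun s hs => (hsol.h_deriv s (hJ hs)).continuousAt.continuousWithinAt)
      fun s hs => (hsol.h_pos s (hJ hs)).le).exists_isMaxOn
    ⟨(0, 0), ⟨le_rfl, hτ0⟩, le_rfl, (hsol.h_pos 0 (hJ ⟨le_rfl, hτ0⟩)).le⟩
    (hsol.u_cont.mono fun p hp => ⟨hJ hp.1, hp.2⟩)
  exact ⟨t₁, ht₁, x₁, hx₁, fun s hs x hx => hmax (show (s, x) ∈ _ from ⟨hs, hx⟩)⟩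

lemma lam_mul_v_le (hsol : IsSol ν χ1 χ2 lam1 lam2 μ1 μ2 a b J Jr u v1 v2 h) (ht : t ∈ J)
    (hlam1 : 0 ≤ lam1) (hlam2 : 0 ≤ lam2) (hμ1 : 0 ≤ μ1) (hμ2 : 0 ≤ μ2)
    (hu : ∀ x ∈ Icc 0 (h t), u t x ≤ U) :
    (∀ x ∈ Icc 0 (h t), lam1 * v1 t x ≤ μ1 * U) ∧ (∀ x ∈ Icc 0 (h t), lam2 * v2 t x ≤ μ2 * U) := by
  have hu_cont : ContinuousOn (u t) (Icc 0 (h t)) := hsol.u_cont.slice ht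
  exact ⟨lam_mul_le_of_neumann (hsol.h_pos t ht) hlam1 hμ1 (hsol.v1_diff_x t ht)
      (hsol.bc0 t ht).2.1 (hsol.bch t ht).2.1 hu_cont (hsol.v1_ode t ht) hu,
    lam_mul_le_of_neumann (hsol.h_pos t ht) hlam2 hμ2 (hsol.v2_diff_x t ht)
      (hsol.bc0 t ht).2.2 (hsol.bch t ht).2.2 hu_cont (hsol.v2_ode t ht) hu⟩

/-- For every `λ`, the chemotactic combination `P = χ₂λ₂v₂ - χ₁λ₁v₁` solves
`P'' = λ P - F_λ` with `F_λ` the left-hand side of `hF`. -/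
lemma mul_chemotaxis_le (hsol : IsSol ν χ1 χ2 lam1 lam2 μ1 μ2 a b J Jr u v1 v2 h) (ht : t ∈ J)
    {lam C : ℝ} (hlam : 0 ≤ lam)
    (hF : ∀ x ∈ Icc 0 (h t), (χ2 * μ2 * lam2 - χ1 * μ1 * lam1) * u t x
      + (lam - lam2) * (χ2 * lam2 * v2 t x) - (lam - lam1) * (χ1 * lam1 * v1 t x) ≤ C) :
    ∀ x ∈ Icc 0 (h t), lam * (χ2 * lam2 * v2 t x - χ1 * lam1 * v1 t x) ≤ C := by
  have hv1 := hsol.v1_diff_x t ht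
  have hv2 := hsol.v2_diff_x t ht
  have hu_cont : ContinuousOn (u t) (Icc 0 (h t)) := hsol.u_cont.slice ht
  have hv1_cont : ContinuousOn (v1 t) (Icc 0 (h t)) := hsol.v1_cont.slice ht
  have hv2_cont : ContinuousOn (v2 t) (Icc 0 (h t)) := hsol.v2_cont.slice ht
  refine mul_le_of_neumann (hsol.h_pos t ht) hlam
    (w' := fun x => χ2 * lam2 * deriv (v2 t) x - χ1 * lam1 * deriv (v1 t) x)
    (w'' := fun x => χ2 * lam2 * deriv (deriv (v2 t)) x - χ1 * lam1 * deriv (deriv (v1 t)) x)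
    (fun x hx => ((hv2 x hx).1.hasDerivAt.const_mul _).sub ((hv1 x hx).1.hasDerivAt.const_mul _))
    (fun x hx => ((hv2 x hx).2.hasDerivAt.const_mul _).sub ((hv1 x hx).2.hasDerivAt.const_mul _))
    (by simp [(hsol.bc0 t ht).2.1, (hsol.bc0 t ht).2.2])
    (by simp [(hsol.bch t ht).2.1, (hsol.bch t ht).2.2])
    (by fun_prop) (fun x hx => ?_) hF
  linear_combination (χ2 * lam2) * hsol.v2_ode t ht x hx - (χ1 * lam1) * hsol.v1_ode t ht x hx

lemma chemotaxis_le_Mconst (hsol : IsSol ν χ1 χ2 lam1 lam2 μ1 μ2 a b J Jr u v1 v2 h)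
    (ht : t ∈ J) (hχ1 : 0 ≤ χ1) (hχ2 : 0 ≤ χ2) (hμ1 : 0 ≤ μ1) (hμ2 : 0 ≤ μ2)
    (hlam1 : 0 < lam1) (hlam2 : 0 < lam2) (hu : ∀ x ∈ Icc 0 (h t), u t x ≤ U) :
    ∀ x ∈ Icc 0 (h t),
      χ2 * lam2 * v2 t x - χ1 * lam1 * v1 t x ≤ Mconst χ1 χ2 lam1 lam2 μ1 μ2 * U := by
  set c := χ2 * μ2 * lam2 - χ1 * μ1 * lam1
  obtain ⟨hv1U, hv2U⟩ := hsol.lam_mul_v_le ht hlam1.le hlam2.le hμ1 hμ2 hu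
  have hu0 y (hy : y ∈ Icc 0 (h t)) := hsol.u_nonneg t ht y hy
  have hv1 y (hy : y ∈ Icc 0 (h t)) :=
    mul_le_pp_mul (lam1 - lam2) (mul_nonneg hlam1.le (hsol.v1_nonneg t ht y hy)) (hv1U y hy)
  have hv2 y (hy : y ∈ Icc 0 (h t)) :=
    mul_le_pp_mul (lam1 - lam2) (mul_nonneg hlam2.le (hsol.v2_nonneg t ht y hy)) (hv2U y hy)
  have hP2 := hsol.mul_chemotaxis_le ht hlam2.le (C := (pp c + χ1 * μ1 * pp (lam1 - lam2)) * U)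
    fun y hy => by
      linarith [mul_le_pp_mul c (hu0 y hy) (hu y hy), mul_le_mul_of_nonneg_left (hv1 y hy) hχ1]
  have hP1 := hsol.mul_chemotaxis_le ht hlam1.le (C := (pp c + χ2 * μ2 * pp (lam1 - lam2)) * U)
    fun y hy => by
      linarith [mul_le_pp_mul c (hu0 y hy) (hu y hy), mul_le_mul_of_nonneg_left (hv2 y hy) hχ2]
  intro x hx
  have hU : 0 ≤ U := (hu0 x hx).trans (hu x hx)
  rw [Mconst, min_mul_of_nonneg _ _ hU]
  refine le_min ?_ ?_
  · have := hP2 x hx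
    rw [mul_comm, ← le_div_iff₀ hlam2] at this
    exact this.trans_eq (by ring)
  · have := hP1 x hx
    rw [mul_comm, ← le_div_iff₀ hlam1] at this
    exact this.trans_eq (by ring)

lemma pde_Icc (hsol : IsSol ν χ1 χ2 lam1 lam2 μ1 μ2 a b J Jr u v1 v2 h) (hJr : Jr ⊆ J)
    (ha : ContinuousOn (Function.uncurry a) (univ ×ˢ Ici 0))
    (hb : ContinuousOn (Function.uncurry b) (univ ×ˢ Ici 0)) (ht : t ∈ Jr) :
    ∀ x ∈ Icc 0 (h t), deriv (fun s => u s x) t = deriv (deriv (u t)) x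
      - χ1 * (deriv (u t) x * deriv (v1 t) x + u t x * (lam1 * v1 t x - μ1 * u t x))
      + χ2 * (deriv (u t) x * deriv (v2 t) x + u t x * (lam2 * v2 t x - μ2 * u t x))
      + u t x * (a t x - b t x * u t x) := by
  have htJ := hJr ht
  have hut : ContinuousOn (fun x => deriv (fun s => u s x) t) (Icc 0 (h t)) :=
    hsol.ut_cont.slice ht
  have hu : ContinuousOn (u t) (Icc 0 (h t)) := hsol.u_cont.slice htJ
  have hux : ContinuousOn (deriv (u t)) (Icc 0 (h t)) := hsol.ux_cont.slice ht
  have huxx : ContinuousOn (deriv (deriv (u t))) (Icc 0 (h t)) := hsol.uxx_cont.slice ht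
  have hv1 : ContinuousOn (v1 t) (Icc 0 (h t)) := hsol.v1_cont.slice htJ
  have hv2 : ContinuousOn (v2 t) (Icc 0 (h t)) := hsol.v2_cont.slice htJ
  have hv1x : ContinuousOn (deriv (v1 t)) (Icc 0 (h t)) := hsol.v1x_cont.slice htJ
  have hv2x : ContinuousOn (deriv (v2 t)) (Icc 0 (h t)) := hsol.v2x_cont.slice htJ
  have ha' : ContinuousOn (a t) (Icc 0 (h t)) :=
    ha.comp (continuous_const.prodMk continuous_id).continuousOn fun _ hx => ⟨mem_univ _, hx.1⟩
  have hb' : ContinuousOn (b t) (Icc 0 (h t)) :=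
    hb.comp (continuous_const.prodMk continuous_id).continuousOn fun _ hx => ⟨mem_univ _, hx.1⟩
  refine EqOn.of_subset_closure (s := Ioo 0 (h t)) (fun x hx => ?_) hut (by fun_prop)
    Ioo_subset_Icc_self (closure_Ioo (hsol.h_pos t htJ).ne).superset
  have hx' := Ioo_subset_Icc_self hx
  rw [hsol.pde t ht x hx,
    deriv_fun_mul (hsol.u_diff_x t ht x hx').1 (hsol.v1_diff_x t htJ x hx').2,
    deriv_fun_mul (hsol.u_diff_x t ht x hx').1 (hsol.v2_diff_x t htJ x hx').2]
  linear_combination (-(χ1 * u t x)) * hsol.v1_ode t htJ x hx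
    + (χ2 * u t x) * hsol.v2_ode t htJ x hx

lemma le_M0const_of_forall_le {T t₁ x₁ : ℝ}
    (hsol : IsSol ν χ1 χ2 lam1 lam2 μ1 μ2 a b (Icc 0 T) (Ioc 0 T) u v1 v2 h)
    (hχ1 : 0 ≤ χ1) (hχ2 : 0 ≤ χ2) (hμ1 : 0 ≤ μ1) (hμ2 : 0 ≤ μ2)
    (hlam1 : 0 < lam1) (hlam2 : 0 < lam2) (ha : Coeff a) (hb : Coeff b)
    (hH1 : χ1 * μ1 - χ2 * μ2 + Mconst χ1 χ2 lam1 lam2 μ1 μ2 < infOn b)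
    (ht₁ : t₁ ∈ Ioc 0 T) (hx₁ : x₁ ∈ Icc 0 (h t₁))
    (hmax : ∀ s ∈ Icc 0 t₁, ∀ x ∈ Icc 0 (h s), u s x ≤ u t₁ x₁) (hpos : 0 < u t₁ x₁) :
    u t₁ x₁ ≤ M0const χ1 χ2 lam1 lam2 μ1 μ2 a b := by
  have ht₁J : t₁ ∈ Icc 0 T := Ioc_subset_Icc_self ht₁
  have hmaxOn : IsMaxOn (u t₁) (Icc 0 (h t₁)) x₁ := hmax t₁ ⟨ht₁.1.le, le_rfl⟩
  have hx₁h : x₁ < h t₁ := hx₁.2.lt_of_ne fun hx => by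
    simp [hx, (hsol.bch t₁ ht₁J).1] at hpos
  have hut : 0 ≤ deriv (fun s => u s x₁) t₁ := by
    refine (hsol.u_diff_t t₁ ht₁ x₁ hx₁).hasDerivAt.nonneg_of_eventually_le_left ?_
    have hh : ContinuousAt h t₁ := (hsol.h_deriv t₁ ht₁J).continuousAt
    filter_upwards [nhdsWithin_le_nhds (hh.eventually (lt_mem_nhds hx₁h)),
      nhdsWithin_le_nhds (lt_mem_nhds ht₁.1), self_mem_nhdsWithin] with s hxs hs0 hst
    exact hmax s ⟨hs0.le, hst.le⟩ x₁ ⟨hx₁.1, hxs.le⟩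
  have hdiff := hsol.u_diff_x t₁ ht₁
  have hux : deriv (u t₁) x₁ = 0 := by
    rcases hx₁.1.eq_or_lt with rfl | h0
    · exact (hsol.bc0 t₁ ht₁J).1
    · exact (hmaxOn.isLocalMax (Icc_mem_nhds h0 hx₁h)).deriv_eq_zero
  have huxx : deriv (deriv (u t₁)) x₁ ≤ 0 :=
    hmaxOn.nonpos_of_deriv2_eqOn (hsol.h_pos t₁ ht₁J) hx₁ (fun x hx => (hdiff x hx).1.hasDerivAt)
      (fun x hx => (hdiff x hx).2.hasDerivAt) hux (hsol.uxx_cont.slice ht₁) fun _ _ => rfl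
  have hP := hsol.chemotaxis_le_Mconst ht₁J hχ1 hχ2 hμ1 hμ2 hlam1 hlam2 hmaxOn x₁ hx₁
  have hpde := hsol.pde_Icc Ioc_subset_Icc_self ha.smooth.continuousOn hb.smooth.continuousOn ht₁
    x₁ hx₁
  have hD : 0 < infOn b + χ2 * μ2 - χ1 * μ1 - Mconst χ1 χ2 lam1 lam2 μ1 μ2 := by linarith
  rw [M0const, le_div_iff₀ hD, ← sub_nonneg]
  refine nonneg_of_mul_nonneg_right ?_ hpos
  rw [hux] at hpde
  linarith [mul_le_mul_of_nonneg_left hP hpos.le,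
    mul_le_mul_of_nonneg_left (ha.le_supOn t₁ hx₁.1) hpos.le,
    mul_le_mul_of_nonneg_right (hb.infOn_le t₁ hx₁.1) (mul_self_nonneg (u t₁ x₁))]

end IsSol

theorem stmt2_general (ν χ1 χ2 lam1 lam2 μ1 μ2 : ℝ) (a b : ℝ → ℝ → ℝ)
    (hχ1 : 0 ≤ χ1) (hχ2 : 0 ≤ χ2) (hμ1 : 0 ≤ μ1) (hμ2 : 0 ≤ μ2)
    (hlam1 : 0 < lam1) (hlam2 : 0 < lam2) (ha : Coeff a) (hb : Coeff b)
    (hH1 : χ1 * μ1 - χ2 * μ2 + Mconst χ1 χ2 lam1 lam2 μ1 μ2 < infOn b)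
    (u0 : ℝ → ℝ) (h0 : ℝ) (hinit : AdmissibleInit u0 h0)
    (T : ℝ) (u v1 v2 : ℝ → ℝ → ℝ) (h : ℝ → ℝ)
    (hsol : IsSol ν χ1 χ2 lam1 lam2 μ1 μ2 a b (Icc 0 T) (Ioc 0 T) u v1 v2 h)
    (hh0 : h 0 = h0) (hu0 : ∀ x ∈ Icc 0 h0, u 0 x = u0 x) :
    ∀ t ∈ Icc 0 T,
      sSup (u t '' Icc 0 (h t)) ≤ max (sSup (u0 '' Icc 0 h0)) (M0const χ1 χ2 lam1 lam2 μ1 μ2 a b) := by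
  intro τ ⟨hτ0, hτT⟩
  obtain ⟨t₁, ht₁, x₁, hx₁, hmax⟩ := hsol.exists_forall_le hτ0 (Icc_subset_Icc_right hτT)
  have hsup0 : ∀ x ∈ Icc 0 h0, u0 x ≤ sSup (u0 '' Icc 0 h0) := fun x hx =>
    le_csSup (isCompact_Icc.image_of_continuousOn hinit.smooth.continuousOn).bddAbove
      (mem_image_of_mem _ hx)
  have hU : u t₁ x₁ ≤ max (sSup (u0 '' Icc 0 h0)) (M0const χ1 χ2 lam1 lam2 μ1 μ2 a b) := by
    rcases ht₁.1.eq_or_lt with rfl | ht₁0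
    · rw [hh0] at hx₁
      exact le_max_of_le_left ((hu0 x₁ hx₁).trans_le (hsup0 x₁ hx₁))
    rcases le_or_gt (u t₁ x₁) 0 with hneg | hpos
    · exact le_max_of_le_left (hneg.trans
        (hinit.dirichlet ▸ hsup0 h0 (right_mem_Icc.2 hinit.h0_pos.le)))
    · exact le_max_of_le_right (hsol.le_M0const_of_forall_le hχ1 hχ2 hμ1 hμ2 hlam1 hlam2 ha hb hH1
        ⟨ht₁0, ht₁.2.trans hτT⟩ hx₁ (fun s hs => hmax s ⟨hs.1, hs.2.trans ht₁.2⟩) hpos)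
  exact csSup_le ⟨_, mem_image_of_mem _ ⟨le_rfl, (hsol.h_pos τ ⟨hτ0, hτT⟩).le⟩⟩
    (forall_mem_image.2 fun x hx => (hmax τ ⟨hτ0, le_rfl⟩ x hx).trans hU)

/-- a priori bound for classical solutions of the FBP under (H1). -/
theorem stmt2 (ν χ1 χ2 lam1 lam2 μ1 μ2 : ℝ) (a b : ℝ → ℝ → ℝ)
    (hν : 0 < ν) (hχ1 : 0 ≤ χ1) (hχ2 : 0 ≤ χ2) (hμ1 : 0 ≤ μ1) (hμ2 : 0 ≤ μ2)
    (hlam1 : 0 < lam1) (hlam2 : 0 < lam2) (ha : Coeff a) (hb : Coeff b)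
    (hH1 : χ1 * μ1 - χ2 * μ2 + Mconst χ1 χ2 lam1 lam2 μ1 μ2 < infOn b)
    (u0 : ℝ → ℝ) (h0 : ℝ) (hinit : AdmissibleInit u0 h0)
    (T : ℝ) (hT : 0 < T) (u v1 v2 : ℝ → ℝ → ℝ) (h : ℝ → ℝ)
    (hsol : IsSol ν χ1 χ2 lam1 lam2 μ1 μ2 a b (Icc 0 T) (Ioc 0 T) u v1 v2 h)
    (hh0 : h 0 = h0) (hu0 : ∀ x ∈ Icc 0 h0, u 0 x = u0 x) :
    ∀ t ∈ Icc 0 T,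
      sSup (u t '' Icc 0 (h t)) ≤ max (sSup (u0 '' Icc 0 h0)) (M0const χ1 χ2 lam1 lam2 μ1 μ2 a b) :=
  stmt2_general ν χ1 χ2 lam1 lam2 μ1 μ2 a b hχ1 hχ2 hμ1 hμ2 hlam1 hlam2 ha hb hH1 u0 h0 hinit T u v1
    v2 h hsol hh0 hu0
end

section
/- Let L > 0, let u : [0, L] → ℝ be continuous with u ≥ 0, and let v1, v2 ∈ C²([0, L]) satisfy v_i''(x) − λ_i v_i(x) + μ_i u(x) = 0 for all x ∈ [0, L] and v_i'(0) = v_i'(L) = 0, for i = 1, 2. Then for every x ∈ [0, L], |χ2 v2'(x) − χ1 v1'(x)| ≤ min{ |χ2μ2 − χ1μ1|/(2√λ2) + χ1μ1|√λ1 − √λ2|/(2√(λ1λ2)), |χ1μ1 − χ2μ2|/(2√λ1) + χ2μ2|√λ2 − √λ1|/(2√(λ1λ2)) } · sup_{[0,L]} u. -/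
/-!
With `s = √λ`, the quantity `v' cosh (s (t - c)) - s v sinh (s (t - c))` has derivative
`-μ u cosh (s (t - c))`; integrating it over `[0, x]` (with `c = 0`) and over `[x, L]` (with
`c = L`), where the Neumann conditions kill the boundary terms, gives `v'(x) = μ (P₊ - P₋)`.
Here `P₊`, `P₋` integrate `u` against nonnegative kernels
`exp (s γ) cosh (s ρ) / (2 sinh (s L))` of total mass exactly `1 / (2 s)`, so
`0 ≤ P± ≤ M / (2 s)` with `M = sup u`. These kernels decrease pointwise in `s`; applied to `u`
and to `M - u` this confines `P±(s₂) - P±(s₁)`, for `s₂ ≤ s₁`, to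
`[0, M / (2 s₂) - M / (2 s₁)]`. With `G = P₊ - P₋`, the splitting
`χ₂ v₂' - χ₁ v₁' = (χ₂ μ₂ - χ₁ μ₁) G(s₂) + χ₁ μ₁ (G(s₂) - G(s₁))` gives the first bound,
and exchanging the indices gives the second.
-/

open Set Real MeasureTheory

noncomputable def neumannKernel (s L γ ρ : ℝ) : ℝ :=
  exp (s * γ) * cosh (s * ρ) / (2 * sinh (s * L))

section Kernel

variable {s L γ ρ : ℝ}

lemma neumannKernel_nonneg (hs : 0 ≤ s) (hL : 0 ≤ L) : 0 ≤ neumannKernel s L γ ρ := by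
  have : 0 ≤ sinh (s * L) := sinh_nonneg_iff.mpr (mul_nonneg hs hL)
  unfold neumannKernel
  positivity

-- The form in which the monotonicity in `s` is visible.
lemma neumannKernel_eq (hsL : 0 < s * L) :
    neumannKernel s L γ ρ
      = (exp (-(s * (L - γ - ρ))) + exp (-(s * (L - γ + ρ))))
          / (2 * (1 - exp (-(2 * s * L)))) := by
  have hden : exp (-(2 * s * L)) < 1 := exp_lt_one_iff.mpr (by linarith)
  have e₁ : exp (-(s * (L - γ - ρ))) = exp (s * γ) * exp (s * ρ) * exp (-(s * L)) := by
    rw [← exp_add, ← exp_add]; ring_nf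
  have e₂ : exp (-(s * (L - γ + ρ))) = exp (s * γ) * exp (-(s * ρ)) * exp (-(s * L)) := by
    rw [← exp_add, ← exp_add]; ring_nf
  have e₃ : exp (-(2 * s * L)) = exp (-(s * L)) * exp (-(s * L)) := by
    rw [← exp_add]; ring_nf
  have e₄ : exp (-(s * L)) * exp (s * L) = 1 := by rw [← exp_add]; simp
  rw [neumannKernel, div_eq_div_iff (by positivity) (by linarith), e₁, e₂, e₃, cosh_eq,
    sinh_eq]
  linear_combination (-(exp (s * γ) * (exp (s * ρ) + exp (-(s * ρ))))) * e₄

lemma neumannKernel_antitoneOn (hL : 0 < L) (hρ : |ρ| ≤ L - γ) :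
    AntitoneOn (fun s => neumannKernel s L γ ρ) (Ioi 0) := by
  intro s₂ hs₂ s₁ hs₁ h
  obtain ⟨hρ₁, hρ₂⟩ := abs_le.mp hρ
  simp only [mem_Ioi] at hs₁ hs₂
  have hden : exp (-(2 * s₂ * L)) < 1 := exp_lt_one_iff.mpr (by nlinarith)
  simp only [neumannKernel_eq (mul_pos hs₁ hL), neumannKernel_eq (mul_pos hs₂ hL)]
  apply div_le_div₀ (by positivity) _ (by linarith)
  · gcongr 2 * (1 - exp ?_)
    nlinarith
  · gcongr exp ?_ + exp ?_ <;> nlinarith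

end Kernel

lemma integral_cosh_mul_sub {s : ℝ} (hs : s ≠ 0) (a b c : ℝ) :
    ∫ y in a..b, cosh (s * (y - c)) = (sinh (s * (b - c)) - sinh (s * (a - c))) / s := by
  have hderiv (y : ℝ) : HasDerivAt (fun t => sinh (s * (t - c)) / s) (cosh (s * (y - c))) y := by
    have := (((hasDerivAt_id y).sub_const c).const_mul s).sinh.div_const s
    simpa [hs] using this
  rw [intervalIntegral.integral_eq_sub_of_hasDerivAt (fun y _ => hderiv y)
    (by apply Continuous.intervalIntegrable; fun_prop), sub_div]

lemma ContinuousOn.intervalIntegrable_mul {w g : ℝ → ℝ} {a b L : ℝ}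
    (hw : ContinuousOn w (Icc 0 L)) (hg : Continuous g) (ha : a ∈ Icc 0 L) (hb : b ∈ Icc 0 L) :
    IntervalIntegrable (fun y => w y * g y) volume a b :=
  ((hw.mono (uIcc_subset_Icc ha hb)).mul hg.continuousOn).intervalIntegrable

noncomputable def greenIntegral (L x s γ₁ γ₂ : ℝ) (w : ℝ → ℝ) : ℝ :=
  (∫ y in x..L, w y * neumannKernel s L γ₁ (y - L))
    + ∫ y in 0..x, w y * neumannKernel s L γ₂ y

section GreenIntegral

variable {L x s γ₁ γ₂ : ℝ} {w : ℝ → ℝ}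

lemma greenIntegral_eq :
    greenIntegral L x s γ₁ γ₂ w
      = (exp (s * γ₁) * (∫ y in x..L, w y * cosh (s * (y - L)))
          + exp (s * γ₂) * ∫ y in 0..x, w y * cosh (s * y)) / (2 * sinh (s * L)) := by
  have hpull (γ ρ y : ℝ) : w y * neumannKernel s L γ ρ
      = exp (s * γ) / (2 * sinh (s * L)) * (w y * cosh (s * ρ)) := by
    rw [neumannKernel]; ring
  simp only [greenIntegral, hpull, intervalIntegral.integral_const_mul]
  ring

lemma greenIntegral_nonneg (hs : 0 ≤ s) (hx : x ∈ Icc 0 L) (hw : ∀ y ∈ Icc 0 L, 0 ≤ w y) :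
    0 ≤ greenIntegral L x s γ₁ γ₂ w := by
  have hL : 0 ≤ L := hx.1.trans hx.2
  apply add_nonneg
  · refine intervalIntegral.integral_nonneg hx.2 fun y hy => ?_
    exact mul_nonneg (hw y ⟨hx.1.trans hy.1, hy.2⟩) (neumannKernel_nonneg hs hL)
  · refine intervalIntegral.integral_nonneg hx.1 fun y hy => ?_
    exact mul_nonneg (hw y ⟨hy.1, hy.2.trans hx.2⟩) (neumannKernel_nonneg hs hL)

lemma greenIntegral_sub {w₁ w₂ : ℝ → ℝ} (hx : x ∈ Icc 0 L)
    (hw₁ : ContinuousOn w₁ (Icc 0 L)) (hw₂ : ContinuousOn w₂ (Icc 0 L)) :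
    greenIntegral L x s γ₁ γ₂ (fun y => w₁ y - w₂ y)
      = greenIntegral L x s γ₁ γ₂ w₁ - greenIntegral L x s γ₁ γ₂ w₂ := by
  have h0 : (0 : ℝ) ∈ Icc 0 L := ⟨le_rfl, hx.1.trans hx.2⟩
  have hL : L ∈ Icc 0 L := ⟨hx.1.trans hx.2, le_rfl⟩
  simp only [greenIntegral_eq, sub_mul]
  rw [intervalIntegral.integral_sub (hw₁.intervalIntegrable_mul (by fun_prop) hx hL)
      (hw₂.intervalIntegrable_mul (by fun_prop) hx hL),
    intervalIntegral.integral_sub (hw₁.intervalIntegrable_mul (by fun_prop) h0 hx)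
      (hw₂.intervalIntegrable_mul (by fun_prop) h0 hx)]
  ring

lemma greenIntegral_const (hs : 0 < s) (hL : 0 < L)
    (hmass : exp (s * γ₁) * sinh (s * (L - x)) + exp (s * γ₂) * sinh (s * x) = sinh (s * L))
    (c : ℝ) :
    greenIntegral L x s γ₁ γ₂ (fun _ => c) = c / (2 * s) := by
  have hsL : 0 < sinh (s * L) := sinh_pos_iff.mpr (mul_pos hs hL)
  have hcosh : ∫ y in (0 : ℝ)..x, cosh (s * y) = sinh (s * x) / s := by
    simpa using integral_cosh_mul_sub hs.ne' 0 x 0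
  rw [greenIntegral_eq, intervalIntegral.integral_const_mul, intervalIntegral.integral_const_mul,
    integral_cosh_mul_sub hs.ne', hcosh, sub_self, mul_zero, sinh_zero,
    show s * (x - L) = -(s * (L - x)) by ring, sinh_neg]
  field_simp
  linear_combination c * hmass

lemma greenIntegral_antitoneOn (hL : 0 < L) (hx : x ∈ Icc 0 L) (hγ₁ : γ₁ ≤ x)
    (hγ₂ : γ₂ ≤ L - x) (hw : ContinuousOn w (Icc 0 L)) (hw₀ : ∀ y ∈ Icc 0 L, 0 ≤ w y) :
    AntitoneOn (fun s => greenIntegral L x s γ₁ γ₂ w) (Ioi 0) := by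
  have h0 : (0 : ℝ) ∈ Icc 0 L := ⟨le_rfl, hL.le⟩
  have hL' : L ∈ Icc 0 L := ⟨hL.le, le_rfl⟩
  intro s₂ hs₂ s₁ hs₁ h
  have hK (s γ : ℝ) : Continuous (neumannKernel s L γ) := by
    unfold neumannKernel; fun_prop
  apply add_le_add
  · refine intervalIntegral.integral_mono_on hx.2
      (hw.intervalIntegrable_mul ((hK s₁ γ₁).comp (continuous_sub_right L)) hx hL')
      (hw.intervalIntegrable_mul ((hK s₂ γ₁).comp (continuous_sub_right L)) hx hL') fun y hy => ?_
    refine mul_le_mul_of_nonneg_left ?_ (hw₀ y ⟨hx.1.trans hy.1, hy.2⟩)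
    refine neumannKernel_antitoneOn hL ?_ hs₂ hs₁ h
    rw [abs_of_nonpos (by linarith [hy.2])]
    linarith [hy.1]
  · refine intervalIntegral.integral_mono_on hx.1
      (hw.intervalIntegrable_mul (hK s₁ γ₂) h0 hx)
      (hw.intervalIntegrable_mul (hK s₂ γ₂) h0 hx) fun y hy => ?_
    refine mul_le_mul_of_nonneg_left ?_ (hw₀ y ⟨hy.1, hy.2.trans hx.2⟩)
    refine neumannKernel_antitoneOn hL ?_ hs₂ hs₁ h
    rw [abs_of_nonneg hy.1]
    linarith [hy.2]

end GreenIntegral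

section Bounds

variable {L x M : ℝ} {u : ℝ → ℝ}

lemma greenIntegral_le {s γ₁ γ₂ : ℝ} (hs : 0 < s) (hL : 0 < L) (hx : x ∈ Icc 0 L)
    (hmass : exp (s * γ₁) * sinh (s * (L - x)) + exp (s * γ₂) * sinh (s * x) = sinh (s * L))
    (hu : ContinuousOn u (Icc 0 L)) (huM : ∀ y ∈ Icc 0 L, u y ≤ M) :
    greenIntegral L x s γ₁ γ₂ u ≤ M / (2 * s) := by
  have h := greenIntegral_nonneg (γ₁ := γ₁) (γ₂ := γ₂) (w := fun y => M - u y) hs.le hx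
    fun y hy => sub_nonneg.mpr (huM y hy)
  rw [greenIntegral_sub (w₁ := fun _ => M) hx continuousOn_const hu,
    greenIntegral_const hs hL hmass] at h
  linarith

lemma greenIntegral_sub_greenIntegral_le {s₁ s₂ γ₁ γ₂ : ℝ} (hs₂ : 0 < s₂) (h : s₂ ≤ s₁)
    (hL : 0 < L) (hx : x ∈ Icc 0 L) (hγ₁ : γ₁ ≤ x) (hγ₂ : γ₂ ≤ L - x)
    (hmass₁ :
      exp (s₁ * γ₁) * sinh (s₁ * (L - x)) + exp (s₁ * γ₂) * sinh (s₁ * x) = sinh (s₁ * L))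
    (hmass₂ :
      exp (s₂ * γ₁) * sinh (s₂ * (L - x)) + exp (s₂ * γ₂) * sinh (s₂ * x) = sinh (s₂ * L))
    (hu : ContinuousOn u (Icc 0 L)) (huM : ∀ y ∈ Icc 0 L, u y ≤ M) :
    greenIntegral L x s₂ γ₁ γ₂ u - greenIntegral L x s₁ γ₁ γ₂ u
      ≤ M / (2 * s₂) - M / (2 * s₁) := by
  have hanti := greenIntegral_antitoneOn (w := fun y => M - u y) hL hx hγ₁ hγ₂
    (continuousOn_const.sub hu) (fun y hy => sub_nonneg.mpr (huM y hy))
    (mem_Ioi.mpr hs₂) (mem_Ioi.mpr (hs₂.trans_le h)) h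
  simp only [greenIntegral_sub (w₁ := fun _ => M) hx continuousOn_const hu,
    greenIntegral_const hs₂ hL hmass₂, greenIntegral_const (hs₂.trans_le h) hL hmass₁]
    at hanti
  linarith

end Bounds

lemma exp_mul_sinh_sub_add_exp_mul_sinh (s L x : ℝ) :
    exp (s * x) * sinh (s * (L - x)) + exp (s * (x - L)) * sinh (s * x) = sinh (s * L) := by
  simp only [sinh_eq, mul_div_assoc', mul_sub, ← exp_add]
  ring_nf

lemma exp_neg_mul_sinh_sub_add_exp_mul_sinh (s L x : ℝ) :
    exp (s * -x) * sinh (s * (L - x)) + exp (s * (L - x)) * sinh (s * x) = sinh (s * L) := by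
  simp only [sinh_eq, mul_div_assoc', mul_sub, ← exp_add]
  ring_nf

noncomputable def greenGrad (L s x : ℝ) (w : ℝ → ℝ) : ℝ :=
  greenIntegral L x s x (x - L) w - greenIntegral L x s (-x) (L - x) w

section GreenGrad

variable {L x M : ℝ} {u : ℝ → ℝ}

lemma abs_greenGrad_le {s : ℝ} (hs : 0 < s) (hL : 0 < L) (hx : x ∈ Icc 0 L)
    (hu : ContinuousOn u (Icc 0 L)) (hu₀ : ∀ y ∈ Icc 0 L, 0 ≤ u y)
    (huM : ∀ y ∈ Icc 0 L, u y ≤ M) :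
    |greenGrad L s x u| ≤ M / (2 * s) :=
  abs_sub_le_of_nonneg_of_le (greenIntegral_nonneg hs.le hx hu₀)
    (greenIntegral_le hs hL hx (exp_mul_sinh_sub_add_exp_mul_sinh s L x) hu huM)
    (greenIntegral_nonneg hs.le hx hu₀)
    (greenIntegral_le hs hL hx (exp_neg_mul_sinh_sub_add_exp_mul_sinh s L x) hu huM)

lemma abs_greenGrad_sub_greenGrad_le {s₁ s₂ : ℝ} (hs₁ : 0 < s₁) (hs₂ : 0 < s₂)
    (hL : 0 < L) (hx : x ∈ Icc 0 L) (hu : ContinuousOn u (Icc 0 L)) (hu₀ : ∀ y ∈ Icc 0 L, 0 ≤ u y)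
    (huM : ∀ y ∈ Icc 0 L, u y ≤ M) :
    |greenGrad L s₂ x u - greenGrad L s₁ x u| ≤ |M / (2 * s₂) - M / (2 * s₁)| := by
  wlog h : s₂ ≤ s₁ generalizing s₁ s₂ with H
  · rw [abs_sub_comm, abs_sub_comm (M / (2 * s₂))]
    exact H hs₂ hs₁ (le_of_not_ge h)
  have hx₁ : -x ≤ x := by linarith [hx.1]
  have hx₂ : x - L ≤ L - x := by linarith [hx.2]
  have hanti (γ₁ γ₂ : ℝ) (hγ₁ : γ₁ ≤ x) (hγ₂ : γ₂ ≤ L - x) :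
      greenIntegral L x s₁ γ₁ γ₂ u ≤ greenIntegral L x s₂ γ₁ γ₂ u :=
    greenIntegral_antitoneOn hL hx hγ₁ hγ₂ hu hu₀ (mem_Ioi.mpr hs₂) (mem_Ioi.mpr hs₁) h
  have hφ := greenIntegral_sub_greenIntegral_le hs₂ h hL hx le_rfl hx₂
    (exp_mul_sinh_sub_add_exp_mul_sinh s₁ L x) (exp_mul_sinh_sub_add_exp_mul_sinh s₂ L x) hu huM
  have hψ := greenIntegral_sub_greenIntegral_le hs₂ h hL hx hx₁ le_rfl
    (exp_neg_mul_sinh_sub_add_exp_mul_sinh s₁ L x)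
    (exp_neg_mul_sinh_sub_add_exp_mul_sinh s₂ L x) hu huM
  have hφ' := hanti x (x - L) le_rfl hx₂
  have hψ' := hanti (-x) (L - x) hx₁ le_rfl
  refine (abs_le.mpr ⟨?_, ?_⟩).trans (le_abs_self _) <;> unfold greenGrad <;> linarith

end GreenGrad

section Representation

variable {lam μ L s : ℝ} {u v v' v'' : ℝ → ℝ}

lemma hasDerivAt_mul_cosh_sub_mul_sinh (hs : s * s = lam) (c : ℝ) {y : ℝ}
    (hvd : HasDerivAt v (v' y) y) (hvdd : HasDerivAt v' (v'' y) y)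
    (heq : v'' y - lam * v y + μ * u y = 0) :
    HasDerivAt (fun t => v' t * cosh (s * (t - c)) - s * v t * sinh (s * (t - c)))
      (-μ * (u y * cosh (s * (y - c)))) y := by
  have harg : HasDerivAt (fun t => s * (t - c)) s y := by
    simpa using ((hasDerivAt_id y).sub_const c).const_mul s
  refine ((hvdd.mul harg.cosh).sub ((hvd.const_mul s).mul harg.sinh)).congr_deriv ?_
  rw [show v'' y = s * s * v y - μ * u y by rw [hs]; linarith]
  ring

lemma mul_integral_mul_cosh_eq (hs : s * s = lam) (c : ℝ) (hu : ContinuousOn u (Icc 0 L))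
    (hvd : ∀ y ∈ Icc 0 L, HasDerivAt v (v' y) y)
    (hvdd : ∀ y ∈ Icc 0 L, HasDerivAt v' (v'' y) y)
    (heq : ∀ y ∈ Icc 0 L, v'' y - lam * v y + μ * u y = 0) {a b : ℝ}
    (ha : a ∈ Icc 0 L) (hb : b ∈ Icc 0 L) :
    μ * ∫ y in a..b, u y * cosh (s * (y - c))
      = (v' a * cosh (s * (a - c)) - s * v a * sinh (s * (a - c)))
        - (v' b * cosh (s * (b - c)) - s * v b * sinh (s * (b - c))) := by
  have hab := uIcc_subset_Icc ha hb
  have hFTC := intervalIntegral.integral_eq_sub_of_hasDerivAt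
    (fun y hy => hasDerivAt_mul_cosh_sub_mul_sinh hs c (hvd y (hab hy)) (hvdd y (hab hy))
      (heq y (hab hy)))
    ((hu.intervalIntegrable_mul (by fun_prop) ha hb).const_mul (-μ))
  rw [intervalIntegral.integral_const_mul] at hFTC
  linarith

lemma eq_mul_greenGrad (hlam : 0 < lam) (hL : 0 < L) (hu : ContinuousOn u (Icc 0 L))
    (hvd : ∀ y ∈ Icc 0 L, HasDerivAt v (v' y) y)
    (hvdd : ∀ y ∈ Icc 0 L, HasDerivAt v' (v'' y) y)
    (heq : ∀ y ∈ Icc 0 L, v'' y - lam * v y + μ * u y = 0) (hbc : v' 0 = 0 ∧ v' L = 0)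
    {x : ℝ} (hx : x ∈ Icc 0 L) :
    v' x = μ * greenGrad L (√lam) x u := by
  set s := √lam
  have hs : s * s = lam := mul_self_sqrt hlam.le
  have hsL : 0 < sinh (s * L) := sinh_pos_iff.mpr (mul_pos (sqrt_pos.mpr hlam) hL)
  have hright := mul_integral_mul_cosh_eq hs L hu hvd hvdd heq hx ⟨hL.le, le_rfl⟩
  have hleft := mul_integral_mul_cosh_eq hs 0 hu hvd hvdd heq ⟨le_rfl, hL.le⟩ hx
  simp only [sub_self, sub_zero, mul_zero, zero_mul, cosh_zero, sinh_zero, hbc] at hright hleft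
  have hsinh :
      sinh (s * L) = sinh (s * x) * cosh (s * (x - L)) - cosh (s * x) * sinh (s * (x - L)) := by
    rw [← sinh_sub]; ring_nf
  have e₁ : exp (s * x) - exp (s * -x) = 2 * sinh (s * x) := by rw [sinh_eq]; ring_nf
  have e₂ : exp (s * (x - L)) - exp (s * (L - x)) = 2 * sinh (s * (x - L)) := by
    rw [sinh_eq, show s * (L - x) = -(s * (x - L)) by ring]; ring
  rw [greenGrad, greenIntegral_eq, greenIntegral_eq, ← sub_div, mul_div_assoc',
    eq_div_iff (by positivity)]
  linear_combination 2 * v' x * hsinh - (exp (s * x) - exp (s * -x)) * hright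
    - (v' x * cosh (s * (x - L)) - s * v x * sinh (s * (x - L))) * e₁
    - (exp (s * (x - L)) - exp (s * (L - x))) * hleft
    + (v' x * cosh (s * x) - s * v x * sinh (s * x)) * e₂

end Representation

lemma abs_mul_sub_mul_le {a b g₁ g₂ c d : ℝ} (hb : 0 ≤ b) (hg₂ : |g₂| ≤ c)
    (hg : |g₂ - g₁| ≤ d) :
    |a * g₂ - b * g₁| ≤ |a - b| * c + b * d :=
  calc |a * g₂ - b * g₁| = |(a - b) * g₂ + b * (g₂ - g₁)| := by ring_nf
    _ ≤ |(a - b) * g₂| + |b * (g₂ - g₁)| := abs_add_le _ _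
    _ ≤ |a - b| * c + b * d := by
      rw [abs_mul, abs_mul, abs_of_nonneg hb]
      gcongr

theorem stmt5_general (χ1 χ2 lam1 lam2 μ1 μ2 L : ℝ)
    (hχ1 : 0 ≤ χ1) (hχ2 : 0 ≤ χ2) (hμ1 : 0 ≤ μ1) (hμ2 : 0 ≤ μ2)
    (hlam1 : 0 < lam1) (hlam2 : 0 < lam2) (hL : 0 < L)
    (u v1 v1' v1'' v2 v2' v2'' : ℝ → ℝ)
    (hu_cont : ContinuousOn u (Icc 0 L)) (hu_nonneg : ∀ x ∈ Icc 0 L, 0 ≤ u x)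
    (hv1d : ∀ x ∈ Icc 0 L, HasDerivAt v1 (v1' x) x)
    (hv1dd : ∀ x ∈ Icc 0 L, HasDerivAt v1' (v1'' x) x)
    (heq1 : ∀ x ∈ Icc 0 L, v1'' x - lam1 * v1 x + μ1 * u x = 0)
    (hbc1 : v1' 0 = 0 ∧ v1' L = 0)
    (hv2d : ∀ x ∈ Icc 0 L, HasDerivAt v2 (v2' x) x)
    (hv2dd : ∀ x ∈ Icc 0 L, HasDerivAt v2' (v2'' x) x)
    (heq2 : ∀ x ∈ Icc 0 L, v2'' x - lam2 * v2 x + μ2 * u x = 0)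
    (hbc2 : v2' 0 = 0 ∧ v2' L = 0) :
    ∀ x ∈ Icc 0 L,
      |χ2 * v2' x - χ1 * v1' x| ≤
        min (|χ2 * μ2 - χ1 * μ1| / (2 * Real.sqrt lam2)
              + χ1 * μ1 * |Real.sqrt lam1 - Real.sqrt lam2| / (2 * Real.sqrt (lam1 * lam2)))
            (|χ1 * μ1 - χ2 * μ2| / (2 * Real.sqrt lam1)
              + χ2 * μ2 * |Real.sqrt lam2 - Real.sqrt lam1| / (2 * Real.sqrt (lam1 * lam2)))
          * sSup (u '' Icc 0 L) := by
  intro x hx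
  set M := sSup (u '' Icc 0 L)
  have huM (y : ℝ) (hy : y ∈ Icc 0 L) : u y ≤ M :=
    le_csSup (isCompact_Icc.image_of_continuousOn hu_cont).bddAbove (mem_image_of_mem u hy)
  have hM : 0 ≤ M := (hu_nonneg 0 ⟨le_rfl, hL.le⟩).trans (huM 0 ⟨le_rfl, hL.le⟩)
  rw [eq_mul_greenGrad hlam1 hL hu_cont hv1d hv1dd heq1 hbc1 hx,
    eq_mul_greenGrad hlam2 hL hu_cont hv2d hv2dd heq2 hbc2 hx, sqrt_mul hlam1.le,
    min_mul_of_nonneg _ _ hM, ← mul_assoc, ← mul_assoc]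
  set s₁ := √lam1
  set s₂ := √lam2
  have hs₁ : 0 < s₁ := sqrt_pos.mpr hlam1
  have hs₂ : 0 < s₂ := sqrt_pos.mpr hlam2
  have hG₁ := abs_greenGrad_le hs₁ hL hx hu_cont hu_nonneg huM
  have hG₂ := abs_greenGrad_le hs₂ hL hx hu_cont hu_nonneg huM
  have hG := abs_greenGrad_sub_greenGrad_le hs₁ hs₂ hL hx hu_cont hu_nonneg huM
  have hgap : |M / (2 * s₂) - M / (2 * s₁)| = M * |s₁ - s₂| / (2 * (s₁ * s₂)) := by
    rw [show M / (2 * s₂) - M / (2 * s₁) = M * (s₁ - s₂) / (2 * (s₁ * s₂)) by field_simp,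
      abs_div, abs_mul, abs_of_nonneg hM, abs_of_pos (show 0 < 2 * (s₁ * s₂) by positivity)]
  refine le_min ?_ ?_
  · calc _ ≤ |χ2 * μ2 - χ1 * μ1| * (M / (2 * s₂)) + χ1 * μ1 * |M / (2 * s₂) - M / (2 * s₁)| :=
          abs_mul_sub_mul_le (by positivity) hG₂ hG
      _ = _ := by rw [hgap]; ring
  · rw [abs_sub_comm]
    calc _ ≤ |χ1 * μ1 - χ2 * μ2| * (M / (2 * s₁)) + χ2 * μ2 * |M / (2 * s₂) - M / (2 * s₁)| :=
          abs_mul_sub_mul_le (by positivity) hG₁ (by rwa [abs_sub_comm])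
      _ = _ := by rw [hgap, abs_sub_comm s₁]; ring

/-- pointwise gradient bound on χ2 v2' − χ1 v1' for Neumann solutions of the
elliptic equations on [0, L]. -/
theorem stmt5 (χ1 χ2 lam1 lam2 μ1 μ2 L : ℝ)
    (hχ1 : 0 ≤ χ1) (hχ2 : 0 ≤ χ2) (hμ1 : 0 ≤ μ1) (hμ2 : 0 ≤ μ2)
    (hlam1 : 0 < lam1) (hlam2 : 0 < lam2) (hL : 0 < L)
    (u v1 v1' v1'' v2 v2' v2'' : ℝ → ℝ)
    (hu_cont : ContinuousOn u (Icc 0 L)) (hu_nonneg : ∀ x ∈ Icc 0 L, 0 ≤ u x)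
    (hv1d : ∀ x ∈ Icc 0 L, HasDerivAt v1 (v1' x) x)
    (hv1dd : ∀ x ∈ Icc 0 L, HasDerivAt v1' (v1'' x) x)
    (hv1c : ContinuousOn v1'' (Icc 0 L))
    (heq1 : ∀ x ∈ Icc 0 L, v1'' x - lam1 * v1 x + μ1 * u x = 0)
    (hbc1 : v1' 0 = 0 ∧ v1' L = 0)
    (hv2d : ∀ x ∈ Icc 0 L, HasDerivAt v2 (v2' x) x)
    (hv2dd : ∀ x ∈ Icc 0 L, HasDerivAt v2' (v2'' x) x)
    (hv2c : ContinuousOn v2'' (Icc 0 L))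
    (heq2 : ∀ x ∈ Icc 0 L, v2'' x - lam2 * v2 x + μ2 * u x = 0)
    (hbc2 : v2' 0 = 0 ∧ v2' L = 0) :
    ∀ x ∈ Icc 0 L,
      |χ2 * v2' x - χ1 * v1' x| ≤
        min (|χ2 * μ2 - χ1 * μ1| / (2 * Real.sqrt lam2)
              + χ1 * μ1 * |Real.sqrt lam1 - Real.sqrt lam2| / (2 * Real.sqrt (lam1 * lam2)))
            (|χ1 * μ1 - χ2 * μ2| / (2 * Real.sqrt lam1)
              + χ2 * μ2 * |Real.sqrt lam2 - Real.sqrt lam1| / (2 * Real.sqrt (lam1 * lam2)))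
          * sSup (u '' Icc 0 L) :=
  stmt5_general χ1 χ2 lam1 lam2 μ1 μ2 L hχ1 hχ2 hμ1 hμ2 hlam1 hlam2 hL u v1 v1' v1'' v2 v2' v2''
    hu_cont hu_nonneg hv1d hv1dd heq1 hbc1 hv2d hv2dd heq2 hbc2
end

section
/- Let λ > 0 and μ ≥ 0. For every ε > 0 there exists R0 > 0 such that for every R ≥ R0 there exists C > 0 with the following property: for every L > R, every continuous u : [0, L] → ℝ with u ≥ 0, and every v ∈ C²([0, L]) satisfying v'' − λ v + μ u = 0 on [0, L] with v'(0) = v'(L) = 0, one has |v'(x)| + λ v(x) ≤ C · sup_{[0,R]} u + ε · sup_{[0,L]} u for all x ∈ [0, R/2]. -/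
open Set Real

/-!
A maximum principle for `h'' - lam h` under Neumann boundary conditions gives `v ≥ 0` and, by
comparison with a barrier `μ m / lam + K cosh (√(lam / 2) x)` (with `m`, `M` bounds for `u` on
`[0, R]` and `[0, L]`), `lam v ≤ μ m + 2 μ M cosh (√(lam / 2) x) / cosh (√(lam / 2) R)`. On
`[0, R / 2]` the `cosh` ratio is `O(R⁻²)`, so there `lam v` and `|v''| = |lam v - μ u|` are at
most `μ m + O(M / R²)`. Integrating `v''` from `v'(0) = 0` over a length `R / 2` then gives
`|v'| ≤ R μ m / 2 + O(M / R)`, and `O(M / R) ≤ ε M` once `R` is large.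
-/

lemma monotoneOn_Icc_of_hasDerivAt_nonneg {a b : ℝ} {f f' : ℝ → ℝ}
    (hf : ∀ x ∈ Icc a b, HasDerivAt f (f' x) x) (hf' : ∀ x ∈ Icc a b, 0 ≤ f' x) :
    MonotoneOn f (Icc a b) :=
  monotoneOn_of_hasDerivWithinAt_nonneg (convex_Icc a b)
    (fun x hx => (hf x hx).continuousAt.continuousWithinAt)
    (fun x hx => (hf x (interior_subset hx)).hasDerivWithinAt)
    (fun x hx => hf' x (interior_subset hx))

theorem nonpos_of_mul_le_deriv2 {a b lam : ℝ} {h h' h'' : ℝ → ℝ} (hab : a < b)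
    (hlam : 0 < lam) (hh : ∀ x ∈ Icc a b, HasDerivAt h (h' x) x)
    (hh' : ∀ x ∈ Icc a b, HasDerivAt h' (h'' x) x) (hle : ∀ x ∈ Icc a b, lam * h x ≤ h'' x)
    (ha : 0 ≤ h' a) (hb : h' b ≤ 0) : ∀ x ∈ Icc a b, h x ≤ 0 := by
  set s := √lam
  have hs : 0 < s := sqrt_pos.2 hlam
  have hs2 : s ^ 2 = lam := sq_sqrt hlam.le
  -- Wronskians of `h` with the solutions `cosh (s * (x - a))` and `cosh (s * (b - x))` of
  -- `f'' = lam * f`; their derivatives are `(h'' - lam * h) * cosh (…) ≥ 0`.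
  set q : ℝ → ℝ := fun x => h' x * cosh (s * (x - a)) - s * h x * sinh (s * (x - a))
  set p : ℝ → ℝ := fun x => h' x * cosh (s * (b - x)) + s * h x * sinh (s * (b - x))
  have hq : MonotoneOn q (Icc a b) := by
    refine monotoneOn_Icc_of_hasDerivAt_nonneg
      (f' := fun x => (h'' x - lam * h x) * cosh (s * (x - a))) (fun x hx => ?_)
      (fun x hx => mul_nonneg (sub_nonneg.2 (hle x hx)) (cosh_pos _).le)
    have hlin : HasDerivAt (fun y => s * (y - a)) s x := by
      simpa using ((hasDerivAt_id x).sub_const a).const_mul s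
    refine (((hh' x hx).mul hlin.cosh).sub
      (((hh x hx).const_mul s).mul hlin.sinh)).congr_deriv ?_
    rw [← hs2]; ring
  have hp : MonotoneOn p (Icc a b) := by
    refine monotoneOn_Icc_of_hasDerivAt_nonneg
      (f' := fun x => (h'' x - lam * h x) * cosh (s * (b - x))) (fun x hx => ?_)
      (fun x hx => mul_nonneg (sub_nonneg.2 (hle x hx)) (cosh_pos _).le)
    have hlin : HasDerivAt (fun y => s * (b - y)) (-s) x := by
      simpa using ((hasDerivAt_id x).const_sub b).const_mul s
    refine (((hh' x hx).mul hlin.cosh).add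
      (((hh x hx).const_mul s).mul hlin.sinh)).congr_deriv ?_
    rw [← hs2]; ring
  intro x hx
  have hqx : 0 ≤ q x :=
    (by simpa [q] using ha : 0 ≤ q a).trans (hq (left_mem_Icc.2 hab.le) hx hx.1)
  have hpx : p x ≤ 0 := (hp hx (right_mem_Icc.2 hab.le) hx.2).trans (by simpa [p] using hb)
  have hwronski : cosh (s * (x - a)) * p x - cosh (s * (b - x)) * q x
      = s * sinh (s * (b - a)) * h x := by
    have hsplit : s * (b - a) = s * (x - a) + s * (b - x) := by ring
    simp only [p, q, hsplit, sinh_add]; ring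
  have hcoef : 0 < s * sinh (s * (b - a)) :=
    mul_pos hs (sinh_pos_iff.2 (mul_pos hs (sub_pos.2 hab)))
  refine nonpos_of_mul_nonpos_right ?_ hcoef
  rw [← hwronski]
  nlinarith [cosh_pos (s * (x - a)), cosh_pos (s * (b - x))]

theorem cosh_mul_div_cosh_mul_le {s t R : ℝ} (hs : 0 < s) (hR : 0 < R) (ht : |t| ≤ R / 2) :
    cosh (s * t) / cosh (s * R) ≤ 16 / (s * R) ^ 2 := by
  set y := s * R / 2
  have hy : 0 ≤ y := by positivity
  have hcosh_t : cosh (s * t) ≤ exp y := by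
    have hty : |s * t| ≤ |y| := by
      rw [abs_mul, abs_of_pos hs, abs_of_nonneg hy]
      calc s * |t| ≤ s * (R / 2) := by gcongr
        _ = y := by ring
    refine (cosh_le_cosh.2 hty).trans ?_
    rw [cosh_eq]
    linarith [exp_le_exp.2 (neg_le_self hy)]
  have hcosh_R : exp y * exp y ≤ 2 * cosh (s * R) := by
    rw [cosh_eq, ← exp_add]
    have : y + y = s * R := by ring
    rw [this]
    linarith [exp_pos (-(s * R))]
  have hexp : y ^ 2 / 2 ≤ exp y := by simpa using pow_div_factorial_le_exp y hy 2
  rw [div_le_div_iff₀ (cosh_pos _) (by positivity)]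
  have hsR : (s * R) ^ 2 = 4 * y ^ 2 := by ring
  rw [hsR]
  nlinarith [exp_pos y, mul_le_mul_of_nonneg_left hcosh_t (sq_nonneg y)]

structure IsNeumannSolution (lam μ L : ℝ) (u v v' v'' : ℝ → ℝ) : Prop where
  hasDerivAt : ∀ x ∈ Icc 0 L, HasDerivAt v (v' x) x
  hasDerivAt_deriv : ∀ x ∈ Icc 0 L, HasDerivAt v' (v'' x) x
  ode : ∀ x ∈ Icc 0 L, v'' x - lam * v x + μ * u x = 0
  deriv_left : v' 0 = 0
  deriv_right : v' L = 0

namespace IsNeumannSolution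

variable {lam μ L : ℝ} {u v v' v'' : ℝ → ℝ}

theorem nonneg (hv : IsNeumannSolution lam μ L u v v' v'') (hL : 0 < L) (hlam : 0 < lam)
    (hμ : 0 ≤ μ) (hu : ∀ x ∈ Icc 0 L, 0 ≤ u x) : ∀ x ∈ Icc 0 L, 0 ≤ v x := by
  intro x hx
  have hneg := nonpos_of_mul_le_deriv2 (h := -v) hL hlam
    (fun y hy => (hv.hasDerivAt y hy).neg) (fun y hy => (hv.hasDerivAt_deriv y hy).neg)
    (fun y hy => by
      simp only [Pi.neg_apply]
      linarith [hv.ode y hy, mul_nonneg hμ (hu y hy)])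
    (by simp [hv.deriv_left]) (by simp [hv.deriv_right]) x hx
  simpa using hneg

theorem mul_le_barrier (hv : IsNeumannSolution lam μ L u v v' v'') (hL : 0 < L) (hlam : 0 < lam)
    (hμ : 0 ≤ μ) {R m M : ℝ} (hR : 0 ≤ R) (hm0 : 0 ≤ m) (hM0 : 0 ≤ M)
    (hm : ∀ x ∈ Icc 0 R, u x ≤ m) (hM : ∀ x ∈ Icc 0 L, u x ≤ M) :
    ∀ x ∈ Icc 0 L,
      lam * v x ≤ μ * m + 2 * μ * M * (cosh (√(lam / 2) * x) / cosh (√(lam / 2) * R)) := by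
  set s := √(lam / 2)
  have hs : 0 < s := sqrt_pos.2 (by positivity)
  have hs2 : s * s = lam / 2 := mul_self_sqrt (by positivity)
  set K := 2 * μ * M / (lam * cosh (s * R))
  have hK : 0 ≤ K := by positivity
  have hKR : lam * K * cosh (s * R) = 2 * μ * M := by
    simp only [K]; field_simp [(cosh_pos (s * R)).ne']
  have hlin : ∀ x, HasDerivAt (fun y => s * y) s x := fun x => by
    simpa using (hasDerivAt_id x).const_mul s
  have hsource : ∀ x ∈ Icc 0 L, μ * u x ≤ μ * m + lam / 2 * K * cosh (s * x) := by
    intro x hx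
    rcases le_total x R with hxR | hRx
    · have := mul_le_mul_of_nonneg_left (hm x ⟨hx.1, hxR⟩) hμ
      have : 0 ≤ lam / 2 * K * cosh (s * x) := by positivity
      linarith
    · have hcosh : cosh (s * R) ≤ cosh (s * x) := by
        rw [cosh_le_cosh, abs_of_nonneg (by positivity), abs_of_nonneg (by nlinarith [hx.1])]
        gcongr
      have := mul_le_mul_of_nonneg_left (hM x hx) hμ
      have := mul_le_mul_of_nonneg_left hcosh (by positivity : 0 ≤ lam / 2 * K)
      nlinarith [mul_nonneg hμ hm0]
  intro x hx
  have hw := nonpos_of_mul_le_deriv2 hL hlam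
    (h := fun y => v y - (μ * m / lam + K * cosh (s * y)))
    (h' := fun y => v' y - K * (sinh (s * y) * s))
    (h'' := fun y => v'' y - K * (cosh (s * y) * s * s))
    (fun y hy => (hv.hasDerivAt y hy).sub (((hlin y).cosh.const_mul K).const_add _))
    (fun y hy => (hv.hasDerivAt_deriv y hy).sub (((hlin y).sinh.mul_const s).const_mul K))
    (fun y hy => by
      rw [mul_assoc _ s s, hs2, mul_sub, mul_add, mul_div_cancel₀ _ hlam.ne']
      linarith [hv.ode y hy, hsource y hy])
    (by simp [hv.deriv_left])
    (by simp [hv.deriv_right]; positivity) x hx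
  have hratio : 2 * μ * M * (cosh (s * x) / cosh (s * R)) = lam * K * cosh (s * x) := by
    rw [← hKR]; field_simp [(cosh_pos (s * R)).ne']
  rw [hratio]
  have := mul_nonpos_of_nonneg_of_nonpos hlam.le hw
  rw [mul_sub, mul_add, mul_div_cancel₀ _ hlam.ne'] at this
  linarith

theorem abs_deriv_le (hv : IsNeumannSolution lam μ L u v v' v'') {x B : ℝ} (hx : x ∈ Icc 0 L)
    (hB : ∀ t ∈ Icc 0 x, |v'' t| ≤ B) : |v' x| ≤ B * x := by
  have hsub : Icc 0 x ⊆ Icc 0 L := Icc_subset_Icc_right hx.2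
  simpa [hv.deriv_left] using norm_image_sub_le_of_norm_deriv_le_segment'
    (fun t ht => (hv.hasDerivAt_deriv t (hsub ht)).hasDerivWithinAt)
    (fun t ht => hB t (Ico_subset_Icc_self ht)) x (right_mem_Icc.2 hx.1)

theorem abs_deriv_add_mul_le (hv : IsNeumannSolution lam μ L u v v' v'') (hlam : 0 < lam)
    (hμ : 0 ≤ μ) (hu : ∀ x ∈ Icc 0 L, 0 ≤ u x) {R m M : ℝ} (hR : 0 < R) (hRL : R ≤ L)
    (hm : ∀ x ∈ Icc 0 R, u x ≤ m) (hM : ∀ x ∈ Icc 0 L, u x ≤ M) :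
    ∀ x ∈ Icc 0 (R / 2),
      |v' x| + lam * v x ≤ (R / 2 + 1) * (μ * m + 64 * μ * M / (lam * R ^ 2)) := by
  have hL : 0 < L := hR.trans_le hRL
  have hm0 : 0 ≤ m := (hu 0 (left_mem_Icc.2 hL.le)).trans (hm 0 (left_mem_Icc.2 hR.le))
  have hM0 : 0 ≤ M := (hu 0 (left_mem_Icc.2 hL.le)).trans (hM 0 (left_mem_Icc.2 hL.le))
  have hsub : Icc 0 (R / 2) ⊆ Icc 0 L := Icc_subset_Icc_right (by linarith)
  set T := 64 * μ * M / (lam * R ^ 2)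
  have hvT : ∀ t ∈ Icc 0 (R / 2), lam * v t ≤ μ * m + T := by
    intro t ht
    have hs : 0 < √(lam / 2) := sqrt_pos.2 (by positivity)
    have hdecay := cosh_mul_div_cosh_mul_le hs hR (t := t)
      (by rw [abs_of_nonneg ht.1]; exact ht.2)
    have hsR : (√(lam / 2) * R) ^ 2 = lam / 2 * R ^ 2 := by
      rw [mul_pow, sq_sqrt (by positivity)]
    have hT : 2 * μ * M * (16 / (√(lam / 2) * R) ^ 2) = T := by
      rw [hsR]; simp only [T]; field_simp; ring
    have := mul_le_mul_of_nonneg_left hdecay (by positivity : 0 ≤ 2 * μ * M)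
    linarith [hv.mul_le_barrier hL hlam hμ hR.le hm0 hM0 hm hM t (hsub ht)]
  have hv'' : ∀ t ∈ Icc 0 (R / 2), |v'' t| ≤ μ * m + T := by
    intro t ht
    have hT : 0 ≤ T := by positivity
    rw [abs_le]
    constructor <;> linarith [hv.ode t (hsub ht), hvT t ht,
      mul_nonneg hlam.le (hv.nonneg hL hlam hμ hu t (hsub ht)), mul_nonneg hμ (hu t (hsub ht)),
      mul_le_mul_of_nonneg_left (hm t ⟨ht.1, by linarith [ht.2]⟩) hμ]
  intro x hx
  have hv' : |v' x| ≤ (μ * m + T) * (R / 2) := by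
    refine (hv.abs_deriv_le (hsub hx) fun t ht => hv'' t ⟨ht.1, ht.2.trans hx.2⟩).trans ?_
    gcongr
    exact hx.2
  linarith [hvT x hx]

end IsNeumannSolution

/-- near the left end, v' and λv are controlled by the sup of u on [0,R]
plus a small multiple of the global sup of u. -/
theorem stmt8 (lam μ : ℝ) (hlam : 0 < lam) (hμ : 0 ≤ μ) :
    ∀ ε > (0:ℝ), ∃ R0 > (0:ℝ), ∀ R ≥ R0, ∃ C > (0:ℝ),
      ∀ L > R, ∀ u v v' v'' : ℝ → ℝ,
        ContinuousOn u (Icc 0 L) → (∀ x ∈ Icc 0 L, 0 ≤ u x) →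
        (∀ x ∈ Icc 0 L, HasDerivAt v (v' x) x) →
        (∀ x ∈ Icc 0 L, HasDerivAt v' (v'' x) x) →
        ContinuousOn v'' (Icc 0 L) →
        (∀ x ∈ Icc 0 L, v'' x - lam * v x + μ * u x = 0) →
        v' 0 = 0 → v' L = 0 →
        ∀ x ∈ Icc 0 (R / 2),
          |v' x| + lam * v x ≤ C * sSup (u '' Icc 0 R) + ε * sSup (u '' Icc 0 L) := by
  intro ε hε
  refine ⟨max 2 (64 * μ / (lam * ε)), by positivity, fun R hR => ?_⟩
  have hR2 : 2 ≤ R := (le_max_left _ _).trans hR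
  refine ⟨μ * R + 1, by nlinarith, ?_⟩
  intro L hRL u v v' v'' hu hu0 hv hv' _ hode hv'0 hv'L x hx
  have hsol : IsNeumannSolution lam μ L u v v' v'' := ⟨hv, hv', hode, hv'0, hv'L⟩
  have hsub : Icc 0 R ⊆ Icc 0 L := Icc_subset_Icc_right hRL.le
  have hmR := hu.mono hsub
  set m := sSup (u '' Icc 0 R)
  set M := sSup (u '' Icc 0 L)
  have h0 : (0 : ℝ) ∈ Icc 0 R := left_mem_Icc.2 (by linarith)
  have hm0 : 0 ≤ m := (hu0 0 (hsub h0)).trans (hmR.le_sSup_image_Icc h0)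
  have hM0 : 0 ≤ M := (hu0 0 (hsub h0)).trans (hu.le_sSup_image_Icc (hsub h0))
  have hest := hsol.abs_deriv_add_mul_le hlam hμ hu0 (by linarith) hRL.le
    (fun t ht => hmR.le_sSup_image_Icc ht) (fun t ht => hu.le_sSup_image_Icc ht) x hx
  have htail : 64 * μ / (lam * R) ≤ ε := by
    rw [div_le_iff₀ (by positivity)]
    have := (div_le_iff₀ (by positivity)).1 ((le_max_right _ _).trans hR)
    nlinarith
  calc |v' x| + lam * v x ≤ (R / 2 + 1) * (μ * m + 64 * μ * M / (lam * R ^ 2)) := hest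
    _ ≤ R * (μ * m + 64 * μ * M / (lam * R ^ 2)) := by gcongr; linarith
    _ = μ * R * m + 64 * μ / (lam * R) * M := by field_simp
    _ ≤ (μ * R + 1) * m + ε * M := by gcongr; linarith
end

section
/- Assume (H1). For all C0 > 0 and C1 > 0 there exists M̃ > 0 (depending only on ν, χ1, χ2, λ1, λ2, μ1, μ2, a_sup, C0 and C1, and in particular independent of T) such that: for every T > 0 and every classical solution (u, v1, v2, h) of the FBP on [0, T] with admissible initial data (u0, h0) satisfying sup_{[0,h0]} u0 ≤ C0, sup_{[0,h0]} |u0'| ≤ C1, and 0 ≤ u(t,x) ≤ C0 for all 0 ≤ t ≤ T, 0 ≤ x ≤ h(t), one has 0 ≤ h'(t) ≤ M̃ for all t ∈ (0, T]. -/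
open Set Filter Topology

/-!
Since `u ≥ 0` vanishes on the free boundary, `uₓ(t, h t) ≤ 0`, so `h' ≥ 0`. For the upper bound,
compare `u` with the barrier `w = C₀ M d (2 - M d)`, `d = h t - x`, on the strip
`0 ≤ d ≤ 1/M`. On the inner edge of the strip `w = C₀ ≥ u`; at `t = 0` the bound on `u₀'` gives
`u₀ ≤ C₁ d ≤ w`; where the strip reaches `x = 0`, the Neumann condition rules out a minimum of
`w - u`. At an interior minimum of `w - u` we would have `uₓ = wₓ`, `uₓₓ ≤ wₓₓ = -2 C₀ M²` and,
as `h' ≥ 0`, `u_t ≥ w_t ≥ 0`. The elliptic maximum principle gives `vᵢ ≤ μᵢ C₀ / λᵢ` and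
`|vᵢₓ| ≤ μᵢ C₀ d`, which makes every chemotactic and reaction term `O(C₀)` with constants independent
of `T` and `h₀`, so the equation forces `u_t ≤ uₓₓ + C₀ Q < 0` once `M² ≫ Q`. Hence `u ≤ w`, and
comparing slopes at `x = h t` gives `h' = -ν uₓ ≤ 2 ν C₀ M`.
-/

theorem HasDerivAt.nonpos_of_isLocalMinOn_Iic {f : ℝ → ℝ} {f' d : ℝ} (hf : HasDerivAt f f' d)
    (hmin : IsLocalMinOn f (Iic d) d) : f' ≤ 0 := by
  refine le_of_tendsto (hf.tendsto_slope.mono_left (nhdsLT_le_nhdsNE d)) ?_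
  filter_upwards [nhdsWithin_mono _ Iio_subset_Iic_self hmin, self_mem_nhdsWithin] with x hx hlt
  rw [slope_def_field]
  exact div_nonpos_of_nonneg_of_nonpos (sub_nonneg.2 hx) (sub_nonpos.2 (le_of_lt hlt))

theorem HasDerivAt.nonneg_of_isLocalMinOn_Ici {f : ℝ → ℝ} {f' c : ℝ} (hf : HasDerivAt f f' c)
    (hmin : IsLocalMinOn f (Ici c) c) : 0 ≤ f' := by
  refine ge_of_tendsto (hf.tendsto_slope.mono_left (nhdsGT_le_nhdsNE c)) ?_
  filter_upwards [nhdsWithin_mono _ Ioi_subset_Ici_self hmin, self_mem_nhdsWithin] with x hx hlt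
  rw [slope_def_field]
  exact div_nonneg (sub_nonneg.2 hx) (sub_nonneg.2 (le_of_lt hlt))

/-- A local minimum at which `f''` were negative would also be a local maximum by the second
derivative test, so `f` would be constant near it. -/
theorem IsLocalMin.deriv_deriv_nonneg {f : ℝ → ℝ} {x₀ : ℝ} (hmin : IsLocalMin f x₀)
    (hc : ContinuousAt f x₀) : 0 ≤ deriv (deriv f) x₀ := by
  by_contra! hneg
  have hmax := isLocalMax_of_deriv_deriv_neg hneg hmin.deriv_eq_zero hc
  have hconst : f =ᶠ[𝓝 x₀] fun _ => f x₀ :=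
    (hmin.and hmax).mono fun x hx => le_antisymm hx.2 hx.1
  have : deriv (deriv f) x₀ = 0 := by
    rw [hconst.deriv.deriv_eq]
    simp
  exact hneg.ne this

theorem abs_sub_le_mul_sub_of_abs_deriv_le {f : ℝ → ℝ} {a b C x y : ℝ}
    (hf : ContinuousOn f (Icc a b)) (hf' : DifferentiableOn ℝ f (Ioo a b))
    (hC : ∀ z ∈ Ioo a b, |deriv f z| ≤ C) (hx : x ∈ Icc a b) (hy : y ∈ Icc a b) (hxy : x ≤ y) :
    |f y - f x| ≤ C * (y - x) := by
  rw [← interior_Icc] at hf' hC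
  rw [abs_le, ← neg_mul]
  exact ⟨(convex_Icc a b).mul_sub_le_image_sub_of_le_deriv hf hf'
      (fun z hz => (abs_le.1 (hC z hz)).1) x hx y hy hxy,
    (convex_Icc a b).image_sub_le_mul_sub_of_deriv_le hf hf'
      (fun z hz => (abs_le.1 (hC z hz)).2) x hx y hy hxy⟩

theorem IsCompact.setOf_mem_Icc {K : Set ℝ} (hK : IsCompact K) {f g : ℝ → ℝ}
    (hf : ContinuousOn f K) (hg : ContinuousOn g K) :
    IsCompact {p : ℝ × ℝ | p.1 ∈ K ∧ p.2 ∈ Icc (f p.1) (g p.1)} := by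
  obtain ⟨m, hm⟩ := hK.bddBelow_image hf
  obtain ⟨m', hm'⟩ := hK.bddAbove_image hg
  have hKR : IsClosed (K ×ˢ (univ : Set ℝ)) := hK.isClosed.prod isClosed_univ
  have hfst : ∀ {φ : ℝ → ℝ}, ContinuousOn φ K → ContinuousOn (fun p : ℝ × ℝ => φ p.1) (K ×ˢ univ) :=
    fun hφ => hφ.comp continuousOn_fst fun p hp => hp.1
  have hclosed : IsClosed {p : ℝ × ℝ | p.1 ∈ K ∧ p.2 ∈ Icc (f p.1) (g p.1)} := by
    convert (hKR.isClosed_le (hfst hf) continuousOn_snd).inter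
      (hKR.isClosed_le continuousOn_snd (hfst hg)) using 1
    ext p
    simp only [mem_ofPred_eq, mem_Icc, mem_inter_iff, mem_prod, mem_univ, and_true]
    tauto
  refine (hK.prod (isCompact_Icc (a := m) (b := m'))).of_isClosed_subset hclosed ?_
  rintro p ⟨hp, hlo, hhi⟩
  exact ⟨hp, (hm ⟨p.1, hp, rfl⟩).trans hlo, hhi.trans (hm' ⟨p.1, hp, rfl⟩)⟩

theorem StrictConvexOn.lt_right_of_deriv_eq_zero {f : ℝ → ℝ} {x y : ℝ}
    (hf : StrictConvexOn ℝ (Icc x y) f) (hxy : x < y) (hd : DifferentiableAt ℝ f x)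
    (h0 : deriv f x = 0) : f x < f y := by
  have := hf.deriv_lt_slope (left_mem_Icc.2 hxy.le) (right_mem_Icc.2 hxy.le) hxy hd
  rwa [h0, slope_def_field, div_pos_iff_of_pos_right (sub_pos.2 hxy), sub_pos] at this

theorem StrictConvexOn.lt_left_of_deriv_eq_zero {f : ℝ → ℝ} {x y : ℝ}
    (hf : StrictConvexOn ℝ (Icc x y) f) (hxy : x < y) (hd : DifferentiableAt ℝ f y)
    (h0 : deriv f y = 0) : f y < f x := by
  have := hf.slope_lt_deriv (left_mem_Icc.2 hxy.le) (right_mem_Icc.2 hxy.le) hxy hd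
  rwa [h0, slope_def_field, div_lt_iff₀ (sub_pos.2 hxy), zero_mul, sub_neg] at this

section Neumann

variable {v w : ℝ → ℝ} {lam μ C H : ℝ}

/-- Maximum principle: at a maximum point above `μ C / lam` we would have `v' = 0` and `v'' > 0`
nearby, so `v` would be strictly convex there and increase away from the maximum point. -/
theorem le_div_of_neumann (hH : 0 < H) (hlam : 0 < lam) (hμ : 0 ≤ μ)
    (hv : ∀ x ∈ Icc 0 H, DifferentiableAt ℝ v x)
    (hode : ∀ x ∈ Ioo 0 H, deriv (deriv v) x = lam * v x - μ * w x)
    (hw : ∀ x ∈ Ioo 0 H, w x ≤ C) (h0 : deriv v 0 = 0) (hH' : deriv v H = 0) :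
    ∀ x ∈ Icc 0 H, v x ≤ μ * C / lam := by
  have hvc : ContinuousOn v (Icc 0 H) := fun x hx => (hv x hx).continuousAt.continuousWithinAt
  obtain ⟨xs, hxs, hmax⟩ := isCompact_Icc.exists_isMaxOn (nonempty_Icc.2 hH.le) hvc
  intro x hx
  refine (hmax hx).trans (not_lt.1 fun hlt => ?_)
  have hconvex : ∀ {y z}, Icc y z ⊆ Icc 0 H → (∀ s ∈ Icc y z, μ * C / lam < v s) →
      StrictConvexOn ℝ (Icc y z) v := by
    intro y z hsub hpos
    refine strictConvexOn_of_deriv2_pos (convex_Icc y z) (hvc.mono hsub) fun s hs => ?_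
    have hs' : s ∈ Ioo 0 H := interior_Icc (a := (0 : ℝ)) ▸ interior_mono hsub hs
    rw [Function.iterate_succ_apply, Function.iterate_one, hode s hs']
    have := (div_lt_iff₀' hlam).1 (hpos s (interior_subset hs))
    nlinarith [hw s hs']
  have hcrit : deriv v xs = 0 := by
    rcases hxs.1.eq_or_lt with rfl | hxs0
    · exact h0
    rcases hxs.2.eq_or_lt with rfl | hxsH
    · exact hH'
    exact (hmax.isLocalMax (Icc_mem_nhds hxs0 hxsH)).deriv_eq_zero
  obtain ⟨ε, hε, hball⟩ := Metric.eventually_nhds_iff.1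
    ((hv xs hxs).continuousAt.eventually (lt_mem_nhds hlt))
  have hnear : ∀ s ∈ Icc 0 H, |s - xs| < ε → μ * C / lam < v s :=
    fun s _ hs => hball (by rwa [Real.dist_eq])
  rcases hxs.2.lt_or_eq with hxsH | hxsH
  · set y := min (xs + ε / 2) H
    have hxy : xs < y := lt_min (by linarith) hxsH
    have hsub : Icc xs y ⊆ Icc 0 H := Icc_subset_Icc hxs.1 (min_le_right _ _)
    have hconv := hconvex hsub fun s hs => hnear s (hsub hs) (by
      rw [abs_of_nonneg (by linarith [hs.1])]
      linarith [hs.2, min_le_left (xs + ε / 2) H])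
    exact (hmax (hsub (right_mem_Icc.2 hxy.le))).not_gt
      (hconv.lt_right_of_deriv_eq_zero hxy (hv xs hxs) hcrit)
  · set y := max (xs - ε / 2) 0
    have hyx : y < xs := max_lt (by linarith) (hxsH ▸ hH)
    have hsub : Icc y xs ⊆ Icc 0 H := Icc_subset_Icc (le_max_right _ _) hxs.2
    have hconv := hconvex hsub fun s hs => hnear s (hsub hs) (by
      rw [abs_of_nonpos (by linarith [hs.2])]
      linarith [hs.1, le_max_left (xs - ε / 2) 0])
    exact (hmax (hsub (left_mem_Icc.2 hyx.le))).not_gt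
      (hconv.lt_left_of_deriv_eq_zero hyx (hv xs hxs) hcrit)

theorem abs_deriv_le_of_neumann (hH : 0 < H) (hlam : 0 < lam) (hμ : 0 ≤ μ)
    (hv : ∀ x ∈ Icc 0 H, DifferentiableAt ℝ v x ∧ DifferentiableAt ℝ (deriv v) x)
    (hode : ∀ x ∈ Ioo 0 H, deriv (deriv v) x = lam * v x - μ * w x)
    (hw : ∀ x ∈ Ioo 0 H, 0 ≤ w x ∧ w x ≤ C) (hvnn : ∀ x ∈ Ioo 0 H, 0 ≤ v x)
    (h0 : deriv v 0 = 0) (hH' : deriv v H = 0) :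
    ∀ x ∈ Icc 0 H, |deriv v x| ≤ μ * C * (H - x) := by
  have hsup := le_div_of_neumann hH hlam hμ (fun x hx => (hv x hx).1) hode
    (fun x hx => (hw x hx).2) h0 hH'
  have hv'' : ∀ x ∈ Ioo 0 H, |deriv (deriv v) x| ≤ μ * C := by
    intro x hx
    have hlv : lam * v x ≤ μ * C := (le_div_iff₀' hlam).1 (hsup x (Ioo_subset_Icc_self hx))
    rw [hode x hx, abs_le]
    constructor <;> nlinarith [hw x hx, hvnn x hx]
  intro x hx
  have := abs_sub_le_mul_sub_of_abs_deriv_le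
    (fun y hy => (hv y hy).2.continuousAt.continuousWithinAt)
    (fun y hy => (hv y (Ioo_subset_Icc_self hy)).2.differentiableWithinAt) hv''
    hx (right_mem_Icc.2 hH.le) hx.2
  rwa [hH', zero_sub, abs_neg] at this

end Neumann

/-- The comparison function of the free boundary estimate, in the variable `d = h t - x`. -/
noncomputable def barrier (C M d : ℝ) : ℝ := C * M * d * (2 - M * d)

theorem continuous_barrier (C M : ℝ) : Continuous (barrier C M) := by
  unfold barrier; fun_prop

@[simp]
theorem barrier_zero (C M : ℝ) : barrier C M 0 = 0 := by
  simp [barrier]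

theorem hasDerivAt_barrier (C M d : ℝ) :
    HasDerivAt (barrier C M) (2 * C * M * (1 - M * d)) d := by
  have := ((hasDerivAt_id d).const_mul (C * M)).mul (((hasDerivAt_id d).const_mul M).const_sub 2)
  exact this.congr_deriv (by simp only [id]; ring)

theorem hasDerivAt_barrier_sub (C M H x : ℝ) :
    HasDerivAt (fun y => barrier C M (H - y)) (-(2 * C * M * (1 - M * (H - x)))) x :=
  ((hasDerivAt_barrier C M (H - x)).comp x ((hasDerivAt_id x).const_sub H)).congr_deriv (by ring)

theorem barrier_inv {M : ℝ} (C : ℝ) (hM : M ≠ 0) : barrier C M M⁻¹ = C := by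
  unfold barrier
  field_simp
  ring

theorem mul_le_barrier {C M d : ℝ} (hCM : 0 ≤ C * M) (hd : 0 ≤ d) (hMd : M * d ≤ 1) :
    C * M * d ≤ barrier C M d := by
  unfold barrier
  nlinarith [mul_nonneg hCM hd]

theorem barrier_slope_mul_le {C M d : ℝ} (hC : 0 ≤ C) (hMd : 0 ≤ M * d) (hMd' : M * d ≤ 1) :
    2 * C * M * (1 - M * d) * d ≤ 2 * C :=
  calc 2 * C * M * (1 - M * d) * d = 2 * C * (M * d * (1 - M * d)) := by ring
    _ ≤ 2 * C * 1 :=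
      mul_le_mul_of_nonneg_left (mul_le_one₀ hMd' (by linarith) (by linarith)) (by positivity)
    _ = 2 * C := mul_one _

theorem le_deriv_of_isLocalMinOn_barrier_sub {φ h : ℝ → ℝ} {C M x t h' : ℝ}
    (hh : HasDerivAt h h' t) (hφ : DifferentiableAt ℝ φ t)
    (hmin : IsLocalMinOn (fun s => barrier C M (h s - x) - φ s) (Iic t) t) :
    2 * C * M * (1 - M * (h t - x)) * h' ≤ deriv φ t := by
  have := (((hasDerivAt_barrier C M _).comp t (hh.sub_const x)).sub
    hφ.hasDerivAt).nonpos_of_isLocalMinOn_Iic hmin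
  linarith

theorem deriv_eq_of_isLocalMin_barrier_sub {φ : ℝ → ℝ} {C M H x : ℝ}
    (hmin : IsLocalMin (fun y => barrier C M (H - y) - φ y) x)
    (hφ : ∀ᶠ y in 𝓝 x, DifferentiableAt ℝ φ y) (hφ' : DifferentiableAt ℝ (deriv φ) x) :
    deriv φ x = -(2 * C * M * (1 - M * (H - x))) ∧ deriv (deriv φ) x ≤ -(2 * C * M * M) := by
  have hderiv : deriv (fun y => barrier C M (H - y) - φ y) =ᶠ[𝓝 x]
      fun y => -(2 * C * M * (1 - M * (H - y))) - deriv φ y :=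
    hφ.mono fun y hy => ((hasDerivAt_barrier_sub C M H y).sub hy.hasDerivAt).deriv
  have hderiv2 : HasDerivAt (fun y => -(2 * C * M * (1 - M * (H - y))) - deriv φ y)
      (-(2 * C * M * M) - deriv (deriv φ) x) x := by
    refine HasDerivAt.sub ?_ hφ'.hasDerivAt
    have := ((((hasDerivAt_id x).const_sub H).const_mul M).const_sub 1).const_mul (2 * C * M)
    exact this.neg.congr_deriv (by ring)
  have h1 := hmin.deriv_eq_zero
  have h2 := hmin.deriv_deriv_nonneg
    ((hasDerivAt_barrier_sub C M H x).continuousAt.sub hφ.self_of_nhds.continuousAt)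
  rw [hderiv.eq_of_nhds] at h1
  rw [hderiv.deriv_eq, hderiv2.deriv] at h2
  constructor <;> linarith

theorem chemotaxis_terms_le {χ1 χ2 μ1 μ2 lam1 lam2 A C d w p q1 q2 V1 V2 α β : ℝ}
    (hχ1 : 0 ≤ χ1) (hχ2 : 0 ≤ χ2) (hμ1 : 0 ≤ μ1) (hμ2 : 0 ≤ μ2) (hlam1 : 0 ≤ lam1)
    (hw : 0 ≤ w) (hwC : w ≤ C) (hp : |p| * d ≤ 2 * C)
    (hq1 : |q1| ≤ μ1 * C * d) (hq2 : |q2| ≤ μ2 * C * d)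
    (hV1 : 0 ≤ V1) (hV2 : lam2 * V2 ≤ μ2 * C) (hα : α ≤ A) (hA : 0 ≤ A) (hβ : 0 ≤ β) :
    -(χ1 * (p * q1 + w * (lam1 * V1 - μ1 * w))) + χ2 * (p * q2 + w * (lam2 * V2 - μ2 * w))
      + w * (α - β * w) ≤ C * (3 * C * (χ1 * μ1 + χ2 * μ2) + A) := by
  have hC : 0 ≤ C := hw.trans hwC
  have hdrift : ∀ {μ q : ℝ}, 0 ≤ μ → |q| ≤ μ * C * d → |p * q| ≤ 2 * μ * C ^ 2 := by
    intro μ q hμ hq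
    calc |p * q| = |p| * |q| := abs_mul p q
      _ ≤ |p| * (μ * C * d) := mul_le_mul_of_nonneg_left hq (abs_nonneg p)
      _ = μ * C * (|p| * d) := by ring
      _ ≤ μ * C * (2 * C) := mul_le_mul_of_nonneg_left hp (by positivity)
      _ = 2 * μ * C ^ 2 := by ring
  have hterm1 : -(p * q1 + w * (lam1 * V1 - μ1 * w)) ≤ 3 * μ1 * C ^ 2 := by
    nlinarith [neg_abs_le (p * q1), hdrift hμ1 hq1, mul_nonneg hw (mul_nonneg hlam1 hV1),
      mul_le_mul hwC hwC hw hC]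
  have hterm2 : p * q2 + w * (lam2 * V2 - μ2 * w) ≤ 3 * μ2 * C ^ 2 := by
    nlinarith [le_abs_self (p * q2), hdrift hμ2 hq2, mul_le_mul_of_nonneg_left hV2 hw,
      mul_le_mul_of_nonneg_right hwC (mul_nonneg hμ2 hC), mul_nonneg hμ2 (mul_nonneg hw hw)]
  have hlogistic : w * (α - β * w) ≤ C * A := by
    nlinarith [mul_le_mul_of_nonneg_left hα hw, mul_le_mul_of_nonneg_right hwC hA,
      mul_nonneg hβ (mul_nonneg hw hw)]
  nlinarith [mul_le_mul_of_nonneg_left hterm1 hχ1, mul_le_mul_of_nonneg_left hterm2 hχ2]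

theorem Coeff.le_supOn_s10 {f : ℝ → ℝ → ℝ} (hf : Coeff f) {t x : ℝ} (hx : 0 ≤ x) :
    f t x ≤ supOn f := by
  obtain ⟨B, hB⟩ := hf.bdd
  refine le_csSup ⟨B, ?_⟩ ⟨t, x, hx, rfl⟩
  rintro y ⟨s, z, hz, rfl⟩
  exact (abs_le.1 (hB s z hz)).2

theorem Coeff.infOn_le_s10 {f : ℝ → ℝ → ℝ} (hf : Coeff f) {t x : ℝ} (hx : 0 ≤ x) :
    infOn f ≤ f t x := by
  obtain ⟨B, hB⟩ := hf.bdd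
  refine csInf_le ⟨-B, ?_⟩ ⟨t, x, hx, rfl⟩
  rintro y ⟨s, z, hz, rfl⟩
  exact (abs_le.1 (hB s z hz)).1

theorem AdmissibleInit.le_mul_sub {u0 : ℝ → ℝ} {h0 C1 : ℝ} (hu0 : AdmissibleInit u0 h0)
    (hC1 : ∀ x ∈ Icc 0 h0, |deriv u0 x| ≤ C1) : ∀ x ∈ Icc 0 h0, u0 x ≤ C1 * (h0 - x) := by
  have hdiff : DifferentiableOn ℝ u0 (Icc 0 h0) := hu0.smooth.differentiableOn (by norm_num)
  intro x hx
  have := abs_sub_le_mul_sub_of_abs_deriv_le hdiff.continuousOn (hdiff.mono Ioo_subset_Icc_self)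
    (fun z hz => hC1 z (Ioo_subset_Icc_self hz)) hx (right_mem_Icc.2 hu0.h0_pos.le) hx.2
  rw [hu0.dirichlet, zero_sub, abs_neg, abs_of_nonneg (hu0.nonneg x hx)] at this
  exact this

def nearBoundary (T δ : ℝ) (h : ℝ → ℝ) : Set (ℝ × ℝ) :=
  {p | p.1 ∈ Icc 0 T ∧ p.2 ∈ Icc (max (h p.1 - δ) 0) (h p.1)}

section Solution

variable {ν χ1 χ2 lam1 lam2 μ1 μ2 T C M : ℝ} {a b : ℝ → ℝ → ℝ} {u v1 v2 : ℝ → ℝ → ℝ}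
  {h : ℝ → ℝ}

theorem IsSol.deriv_nonneg (sol : IsSol ν χ1 χ2 lam1 lam2 μ1 μ2 a b (Icc 0 T) (Ioc 0 T) u v1 v2 h)
    (hν : 0 ≤ ν) {t : ℝ} (ht : t ∈ Ioc 0 T) : 0 ≤ deriv h t := by
  have ht' : t ∈ Icc 0 T := Ioc_subset_Icc_self ht
  have hpos := sol.h_pos t ht'
  have hux : deriv (u t) (h t) ≤ 0 := by
    refine (sol.u_diff_x t ht (h t) ⟨hpos.le, le_rfl⟩).1.hasDerivAt.nonpos_of_isLocalMinOn_Iic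
      (mem_of_superset (Icc_mem_nhdsLE hpos) fun x hx => ?_)
    rw [mem_ofPred_eq, (sol.bch t ht').1]
    exact sol.u_nonneg t ht' x hx
  rw [(sol.h_deriv t ht').deriv]
  nlinarith

theorem IsSol.deriv_time_le
    (sol : IsSol ν χ1 χ2 lam1 lam2 μ1 μ2 a b (Icc 0 T) (Ioc 0 T) u v1 v2 h)
    (hχ1 : 0 ≤ χ1) (hχ2 : 0 ≤ χ2) (hμ1 : 0 ≤ μ1) (hμ2 : 0 ≤ μ2) (hlam1 : 0 < lam1)
    (hlam2 : 0 < lam2) {t x A : ℝ} (ht : t ∈ Ioc 0 T) (hx : x ∈ Ioo 0 (h t))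
    (hu : ∀ y ∈ Icc 0 (h t), u t y ≤ C) (ha : a t x ≤ A) (hA : 0 ≤ A) (hb : 0 ≤ b t x)
    (hux : |deriv (u t) x| * (h t - x) ≤ 2 * C) :
    deriv (fun s => u s x) t
      ≤ deriv (deriv (u t)) x + C * (3 * C * (χ1 * μ1 + χ2 * μ2) + A) := by
  have ht' : t ∈ Icc 0 T := Ioc_subset_Icc_self ht
  have hH := sol.h_pos t ht'
  have hxI : x ∈ Icc 0 (h t) := Ioo_subset_Icc_self hx
  have hw : ∀ y ∈ Ioo 0 (h t), 0 ≤ u t y ∧ u t y ≤ C := fun y hy =>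
    ⟨sol.u_nonneg t ht' y (Ioo_subset_Icc_self hy), hu y (Ioo_subset_Icc_self hy)⟩
  have hode1 : ∀ y ∈ Ioo 0 (h t), deriv (deriv (v1 t)) y = lam1 * v1 t y - μ1 * u t y :=
    fun y hy => by linarith [sol.v1_ode t ht' y hy]
  have hode2 : ∀ y ∈ Ioo 0 (h t), deriv (deriv (v2 t)) y = lam2 * v2 t y - μ2 * u t y :=
    fun y hy => by linarith [sol.v2_ode t ht' y hy]
  have hv1x := abs_deriv_le_of_neumann hH hlam1 hμ1 (sol.v1_diff_x t ht') hode1 hw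
    (fun y hy => sol.v1_nonneg t ht' y (Ioo_subset_Icc_self hy)) (sol.bc0 t ht').2.1
    (sol.bch t ht').2.1 x hxI
  have hv2x := abs_deriv_le_of_neumann hH hlam2 hμ2 (sol.v2_diff_x t ht') hode2 hw
    (fun y hy => sol.v2_nonneg t ht' y (Ioo_subset_Icc_self hy)) (sol.bc0 t ht').2.2
    (sol.bch t ht').2.2 x hxI
  have hv2 := le_div_of_neumann hH hlam2 hμ2 (fun y hy => (sol.v2_diff_x t ht' y hy).1) hode2
    (fun y hy => (hw y hy).2) (sol.bc0 t ht').2.2 (sol.bch t ht').2.2 x hxI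
  have hux' := (sol.u_diff_x t ht x hxI).1.hasDerivAt
  rw [sol.pde t ht x hx, (hux'.fun_mul (sol.v1_diff_x t ht' x hxI).2.hasDerivAt).deriv,
    (hux'.fun_mul (sol.v2_diff_x t ht' x hxI).2.hasDerivAt).deriv, hode1 x hx, hode2 x hx]
  have := chemotaxis_terms_le hχ1 hχ2 hμ1 hμ2 hlam1.le (hw x hx).1 (hw x hx).2 hux hv1x hv2x
    (sol.v1_nonneg t ht' x hxI) ((le_div_iff₀' hlam2).1 hv2) ha hA hb
  linarith

theorem IsSol.not_isMinOn_of_mem_Ioo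
    (sol : IsSol ν χ1 χ2 lam1 lam2 μ1 μ2 a b (Icc 0 T) (Ioc 0 T) u v1 v2 h) (hν : 0 ≤ ν)
    {Q : ℝ} (hC : 0 < C) (hM : 0 < M) (hQ : Q < 2 * M ^ 2)
    (hpde : ∀ t ∈ Ioc 0 T, ∀ x ∈ Ioo 0 (h t), |deriv (u t) x| * (h t - x) ≤ 2 * C →
      deriv (fun s => u s x) t ≤ deriv (deriv (u t)) x + C * Q)
    {t x : ℝ} (ht : t ∈ Ioc 0 T) (hx : x ∈ Ioo (max (h t - M⁻¹) 0) (h t))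
    (hmin : IsMinOn (fun p : ℝ × ℝ => barrier C M (h p.1 - p.2) - u p.1 p.2)
      (nearBoundary T M⁻¹ h) (t, x)) : False := by
  have ht' : t ∈ Icc 0 T := Ioc_subset_Icc_self ht
  have hx0 : 0 < x := (le_max_right _ _).trans_lt hx.1
  have hxI : x ∈ Icc 0 (h t) := ⟨hx0.le, hx.2.le⟩
  have hdist : h t - x < M⁻¹ := by linarith [(le_max_left (h t - M⁻¹) 0).trans_lt hx.1]
  have hMd : M * (h t - x) < 1 := by
    simpa [hM.ne'] using mul_lt_mul_of_pos_left hdist hM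
  have hd : 0 < h t - x := sub_pos.2 hx.2
  have hspace : IsLocalMin (fun y => barrier C M (h t - y) - u t y) x := by
    filter_upwards [isOpen_Ioo.mem_nhds hx] with y hy
    exact hmin (show (t, y) ∈ nearBoundary T M⁻¹ h from ⟨ht', Ioo_subset_Icc_self hy⟩)
  obtain ⟨hux, huxx⟩ := deriv_eq_of_isLocalMin_barrier_sub hspace
    (Filter.eventually_of_mem (isOpen_Ioo.mem_nhds ⟨hx0, hx.2⟩)
      fun y hy => (sol.u_diff_x t ht y (Ioo_subset_Icc_self hy)).1)
    (sol.u_diff_x t ht x hxI).2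
  have htime : IsLocalMinOn (fun s => barrier C M (h s - x) - u s x) (Iic t) t := by
    have hnear : ∀ᶠ s in 𝓝 t, h s ∈ Ioo x (x + M⁻¹) ∧ 0 < s :=
      ((sol.h_deriv t ht').continuousAt.eventually
        (isOpen_Ioo.mem_nhds ⟨hx.2, by linarith⟩)).and (lt_mem_nhds ht.1)
    filter_upwards [nhdsWithin_le_nhds hnear, self_mem_nhdsWithin] with s hs hst
    exact hmin (show (s, x) ∈ nearBoundary T M⁻¹ h from
      ⟨⟨hs.2.le, hst.trans ht.2⟩, max_le (by linarith [hs.1.2]) hx0.le, hs.1.1.le⟩)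
  have hut : 0 ≤ deriv (fun s => u s x) t :=
    (mul_nonneg (mul_nonneg (by positivity) (by linarith)) (sol.deriv_nonneg hν ht)).trans
      (le_deriv_of_isLocalMinOn_barrier_sub (sol.h_deriv t ht').differentiableAt.hasDerivAt
        (sol.u_diff_t t ht x hxI) htime)
  have hgrad : |deriv (u t) x| * (h t - x) ≤ 2 * C := by
    rw [hux, abs_neg, abs_of_nonneg (mul_nonneg (by positivity) (by linarith))]
    exact barrier_slope_mul_le hC.le (mul_pos hM hd).le hMd.le
  have := hpde t ht x ⟨hx0, hx.2⟩ hgrad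
  nlinarith

theorem IsSol.not_isMinOn_zero
    (sol : IsSol ν χ1 χ2 lam1 lam2 μ1 μ2 a b (Icc 0 T) (Ioc 0 T) u v1 v2 h)
    (hC : 0 < C) (hM : 0 < M) {t : ℝ} (ht : t ∈ Ioc 0 T) (hh : h t < M⁻¹)
    (hmin : IsMinOn (fun p : ℝ × ℝ => barrier C M (h p.1 - p.2) - u p.1 p.2)
      (nearBoundary T M⁻¹ h) (t, 0)) : False := by
  have ht' : t ∈ Icc 0 T := Ioc_subset_Icc_self ht
  have hpos := sol.h_pos t ht'
  have hmin' : IsLocalMinOn (fun y => barrier C M (h t - y) - u t y) (Ici 0) 0 := by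
    refine mem_of_superset (Icc_mem_nhdsGE hpos) fun y hy =>
      hmin (show (t, y) ∈ nearBoundary T M⁻¹ h from ⟨ht', ?_, hy.2⟩)
    rw [max_eq_right (by linarith)]
    exact hy.1
  have := ((hasDerivAt_barrier_sub C M (h t) 0).sub
    (sol.u_diff_x t ht 0 ⟨le_rfl, hpos.le⟩).1.hasDerivAt).nonneg_of_isLocalMinOn_Ici hmin'
  rw [(sol.bc0 t ht').1, sub_zero, sub_zero] at this
  have hMh : M * h t < 1 := by simpa [hM.ne'] using mul_lt_mul_of_pos_left hh hM
  nlinarith [mul_pos hC hM]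

theorem IsSol.exists_isMinOn_nearBoundary
    (sol : IsSol ν χ1 χ2 lam1 lam2 μ1 μ2 a b (Icc 0 T) (Ioc 0 T) u v1 v2 h) (hT : 0 ≤ T)
    (hM : 0 < M) (C : ℝ) :
    ∃ p ∈ nearBoundary T M⁻¹ h, IsMinOn (fun p : ℝ × ℝ => barrier C M (h p.1 - p.2) - u p.1 p.2)
      (nearBoundary T M⁻¹ h) p := by
  have hh : ContinuousOn h (Icc 0 T) :=
    fun t ht => (sol.h_deriv t ht).continuousAt.continuousWithinAt
  have hcompact : IsCompact (nearBoundary T M⁻¹ h) :=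
    isCompact_Icc.setOf_mem_Icc ((hh.sub continuousOn_const).sup continuousOn_const) hh
  have hne : (nearBoundary T M⁻¹ h).Nonempty :=
    ⟨(0, h 0), left_mem_Icc.2 hT,
      max_le (by linarith [inv_pos.2 hM]) (sol.h_pos 0 ⟨le_rfl, hT⟩).le, le_rfl⟩
  exact hcompact.exists_isMinOn hne (((continuous_barrier C M).comp_continuousOn
    ((hh.comp continuousOn_fst fun p hp => hp.1).sub continuousOn_snd)).sub
    (sol.u_cont.mono fun p hp => ⟨hp.1, (le_max_right _ _).trans hp.2.1, hp.2.2⟩))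

theorem IsSol.le_barrier
    (sol : IsSol ν χ1 χ2 lam1 lam2 μ1 μ2 a b (Icc 0 T) (Ioc 0 T) u v1 v2 h) (hν : 0 ≤ ν)
    (hT : 0 ≤ T) {Q : ℝ} (hC : 0 < C) (hM : 0 < M) (hQ : Q < 2 * M ^ 2)
    (hu : ∀ t ∈ Icc 0 T, ∀ x ∈ Icc 0 (h t), u t x ≤ C)
    (hinit : ∀ x ∈ Icc 0 (h 0), u 0 x ≤ C * M * (h 0 - x))
    (hpde : ∀ t ∈ Ioc 0 T, ∀ x ∈ Ioo 0 (h t), |deriv (u t) x| * (h t - x) ≤ 2 * C →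
      deriv (fun s => u s x) t ≤ deriv (deriv (u t)) x + C * Q) :
    ∀ p ∈ nearBoundary T M⁻¹ h, u p.1 p.2 ≤ barrier C M (h p.1 - p.2) := by
  set G := fun p : ℝ × ℝ => barrier C M (h p.1 - p.2) - u p.1 p.2
  obtain ⟨⟨t, x⟩, hp, hmin⟩ := sol.exists_isMinOn_nearBoundary hT hM C
  obtain ⟨ht, hxlo, hxhi⟩ : t ∈ Icc 0 T ∧ max (h t - M⁻¹) 0 ≤ x ∧ x ≤ h t := hp
  suffices 0 ≤ G (t, x) from fun q hq => sub_nonneg.1 (this.trans (hmin hq))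
  have hxI : x ∈ Icc 0 (h t) := ⟨(le_max_right _ _).trans hxlo, hxhi⟩
  have hMd : M * (h t - x) ≤ 1 := by
    simpa [hM.ne'] using mul_le_mul_of_nonneg_left
      (show h t - x ≤ M⁻¹ by linarith [(le_max_left (h t - M⁻¹) 0).trans hxlo]) hM.le
  rcases hxhi.eq_or_lt with hxh | hxh
  · simp [G, hxh, (sol.bch t ht).1]
  rcases ht.1.eq_or_lt with ht0 | ht0
  · subst ht0
    have := mul_le_barrier (by positivity) (sub_nonneg.2 hxhi) hMd (C := C)
    simp only [G]
    linarith [hinit x hxI]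
  have ht' : t ∈ Ioc 0 T := ⟨ht0, ht.2⟩
  rcases hxlo.eq_or_lt with hxL | hxL
  · rcases le_or_gt M⁻¹ (h t) with hδ | hδ
    · rw [max_eq_left (by linarith)] at hxL
      subst hxL
      simp only [G, sub_sub_cancel, barrier_inv C hM.ne']
      linarith [hu t ht _ hxI]
    · rw [max_eq_right (by linarith)] at hxL
      exact (sol.not_isMinOn_zero hC hM ht' hδ (hxL ▸ hmin)).elim
  · exact (sol.not_isMinOn_of_mem_Ioo hν hC hM hQ hpde ht' ⟨hxL, hxh⟩ hmin).elim

theorem IsSol.deriv_le_of_le_barrier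
    (sol : IsSol ν χ1 χ2 lam1 lam2 μ1 μ2 a b (Icc 0 T) (Ioc 0 T) u v1 v2 h) (hν : 0 ≤ ν)
    (hM : 0 < M) {t : ℝ} (ht : t ∈ Ioc 0 T)
    (hle : ∀ x ∈ Icc (max (h t - M⁻¹) 0) (h t), u t x ≤ barrier C M (h t - x)) :
    deriv h t ≤ 2 * ν * C * M := by
  have ht' : t ∈ Icc 0 T := Ioc_subset_Icc_self ht
  have hpos := sol.h_pos t ht'
  have hL : max (h t - M⁻¹) 0 < h t := max_lt (by linarith [inv_pos.2 hM]) hpos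
  have hmin : IsLocalMinOn (fun y => barrier C M (h t - y) - u t y) (Iic (h t)) (h t) := by
    refine mem_of_superset (Icc_mem_nhdsLE hL) fun y hy => ?_
    simp only [mem_ofPred_eq, sub_self, (sol.bch t ht').1]
    linarith [hle y hy, barrier_zero C M]
  have := ((hasDerivAt_barrier_sub C M (h t) (h t)).sub
    (sol.u_diff_x t ht (h t) ⟨hpos.le, le_rfl⟩).1.hasDerivAt).nonpos_of_isLocalMinOn_Iic hmin
  rw [(sol.h_deriv t ht').deriv]
  rw [sub_self, mul_zero, sub_zero, mul_one] at this
  nlinarith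

end Solution

theorem stmt10_general (ν χ1 χ2 lam1 lam2 μ1 μ2 : ℝ) (a b : ℝ → ℝ → ℝ)
    (hν : 0 < ν) (hχ1 : 0 ≤ χ1) (hχ2 : 0 ≤ χ2) (hμ1 : 0 ≤ μ1) (hμ2 : 0 ≤ μ2)
    (hlam1 : 0 < lam1) (hlam2 : 0 < lam2) (ha : Coeff a) (hb : Coeff b) :
    ∀ C0 > (0:ℝ), ∀ C1 > (0:ℝ), ∃ Mt > (0:ℝ),
      ∀ T > (0:ℝ), ∀ (u0 : ℝ → ℝ) (h0 : ℝ) (u v1 v2 : ℝ → ℝ → ℝ) (h : ℝ → ℝ),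
        AdmissibleInit u0 h0 →
        IsSol ν χ1 χ2 lam1 lam2 μ1 μ2 a b (Icc 0 T) (Ioc 0 T) u v1 v2 h →
        h 0 = h0 → (∀ x ∈ Icc 0 h0, u 0 x = u0 x) →
        (∀ x ∈ Icc 0 h0, u0 x ≤ C0) →
        (∀ x ∈ Icc 0 h0, |deriv u0 x| ≤ C1) →
        (∀ t ∈ Icc 0 T, ∀ x ∈ Icc 0 (h t), 0 ≤ u t x ∧ u t x ≤ C0) →
        ∀ t ∈ Ioc 0 T, 0 ≤ deriv h t ∧ deriv h t ≤ Mt := by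
  intro C0 hC0 C1 hC1
  set Q := 3 * C0 * (χ1 * μ1 + χ2 * μ2) + |supOn a|
  set M := 1 + C1 / C0 + Q
  have hM : 0 < M := by positivity
  have hQM : Q < 2 * M ^ 2 := by
    nlinarith [show 1 + Q ≤ M by simp only [M]; linarith [div_pos hC1 hC0]]
  have hC1M : C1 ≤ C0 * M := by
    have : C0 * M = C0 + C1 + C0 * Q := by simp only [M]; field_simp
    nlinarith [show 0 ≤ Q by positivity]
  refine ⟨2 * ν * C0 * M, by positivity, ?_⟩
  intro T hT u0 h0 u v1 v2 h hu0 sol hh0 hinit _ hu0C1 hbound t ht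
  subst hh0
  have hdecay : ∀ x ∈ Icc 0 (h 0), u 0 x ≤ C0 * M * (h 0 - x) := fun x hx =>
    (hinit x hx).trans_le <| (hu0.le_mul_sub hu0C1 x hx).trans <|
      mul_le_mul_of_nonneg_right hC1M (sub_nonneg.2 hx.2)
  have hcmp := sol.le_barrier hν.le hT.le hC0 hM hQM (fun s hs x hx => (hbound s hs x hx).2)
    hdecay fun s hs x hx hux => sol.deriv_time_le hχ1 hχ2 hμ1 hμ2 hlam1 hlam2 hs hx
      (fun y hy => (hbound s (Ioc_subset_Icc_self hs) y hy).2)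
      ((ha.le_supOn_s10 hx.1.le).trans (le_abs_self _)) (abs_nonneg _)
      (hb.inf_pos.le.trans (hb.infOn_le_s10 hx.1.le)) hux
  exact ⟨sol.deriv_nonneg hν.le ht, sol.deriv_le_of_le_barrier hν.le hM ht fun x hx =>
    hcmp (t, x) ⟨Ioc_subset_Icc_self ht, hx⟩⟩

/-- a bound on h', uniform in T, for solutions with bounded data. -/
theorem stmt10 (ν χ1 χ2 lam1 lam2 μ1 μ2 : ℝ) (a b : ℝ → ℝ → ℝ)
    (hν : 0 < ν) (hχ1 : 0 ≤ χ1) (hχ2 : 0 ≤ χ2) (hμ1 : 0 ≤ μ1) (hμ2 : 0 ≤ μ2)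
    (hlam1 : 0 < lam1) (hlam2 : 0 < lam2) (ha : Coeff a) (hb : Coeff b)
    (hH1 : χ1 * μ1 - χ2 * μ2 + Mconst χ1 χ2 lam1 lam2 μ1 μ2 < infOn b) :
    ∀ C0 > (0:ℝ), ∀ C1 > (0:ℝ), ∃ Mt > (0:ℝ),
      ∀ T > (0:ℝ), ∀ (u0 : ℝ → ℝ) (h0 : ℝ) (u v1 v2 : ℝ → ℝ → ℝ) (h : ℝ → ℝ),
        AdmissibleInit u0 h0 →
        IsSol ν χ1 χ2 lam1 lam2 μ1 μ2 a b (Icc 0 T) (Ioc 0 T) u v1 v2 h →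
        h 0 = h0 → (∀ x ∈ Icc 0 h0, u 0 x = u0 x) →
        (∀ x ∈ Icc 0 h0, u0 x ≤ C0) →
        (∀ x ∈ Icc 0 h0, |deriv u0 x| ≤ C1) →
        (∀ t ∈ Icc 0 T, ∀ x ∈ Icc 0 (h t), 0 ≤ u t x ∧ u t x ≤ C0) →
        ∀ t ∈ Ioc 0 T, 0 ≤ deriv h t ∧ deriv h t ≤ Mt :=
  stmt10_general ν χ1 χ2 lam1 lam2 μ1 μ2 a b hν hχ1 hχ2 hμ1 hμ2 hlam1 hlam2 ha hb
end
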